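/- arXiv:2108.12426 — 9 statements merged into one kernel-verified Lean document; each statement's English description precedes it below -/
import Mathlib

section
/- The generalized Huber loss function h^α_{a,b} is differentiable on ℝ, with derivative (h^α_{a,b})'(u) = |𝟙_{u≥0} − α| · κ_{a,b}(u) for all u ∈ ℝ, where κ_{a,b}(u) = max(min(u, b), −a). -/
open Set

/-- The capping function `κ_{a,b}(x) = max(min(x,b), -a)`. -/
noncomputable def kap (a b x : ℝ) : ℝ := max (min x b) (-a)

/-- The generalized Huber loss `h^α_{a,b}`. -/
noncomputable def genHuber (α a b u : ℝ) : ℝ :=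
  if u < -a then -α * a * (u + a / 2)
  else if b < u then (1 - α) * b * (u - b / 2)
  else |(if 0 ≤ u then (1 : ℝ) else 0) - α| * u ^ 2 / 2

/-!
Write `v⁺ = max v 0`. The function `v ↦ (v⁺)² / 2` is `C¹` with derivative `v⁺`, so the
one-sided Huber loss `H_c(v) = (v⁺)² / 2 - ((v - c)⁺)² / 2` (zero for `v ≤ 0`, `v² / 2` on
`[0, c]`, linear beyond `c`) is differentiable everywhere, its derivative `v⁺ - (v - c)⁺` being
`v` clamped to `[0, c]`. The generalized Huber loss splits as
`h^α_{a,b}(u) = (1 - α) H_b(u) + α H_a(-u)`, so it is differentiable with no case analysis,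
and case analysis on the sign of `u` is only needed to identify the resulting derivative
with `|𝟙_{u ≥ 0} - α| κ_{a,b}(u)`.
-/

theorem HasDerivAt.of_eqOn_Iic_of_eqOn_Ici {E : Type*} [NormedAddCommGroup E] [NormedSpace ℝ E]
    {f g h : ℝ → E} {f' : E} {x : ℝ} (hg : HasDerivAt g f' x) (hh : HasDerivAt h f' x)
    (hfg : EqOn f g (Iic x)) (hfh : EqOn f h (Ici x)) : HasDerivAt f f' x := by
  have := (hg.hasDerivWithinAt.congr hfg (hfg self_mem_Iic)).union
    (hh.hasDerivWithinAt.congr hfh (hfh self_mem_Ici))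
  rwa [Iic_union_Ici, hasDerivWithinAt_univ] at this

theorem hasDerivAt_max_zero_sq_div_two (x : ℝ) :
    HasDerivAt (fun y : ℝ => max y 0 ^ 2 / 2) (max x 0) x := by
  have hsq (y : ℝ) : HasDerivAt (fun y : ℝ => y ^ 2 / 2) y y := by
    simpa using (hasDerivAt_pow 2 y).div_const 2
  rcases lt_trichotomy x 0 with hx | rfl | hx
  · rw [max_eq_right hx.le]
    refine (hasDerivAt_const x (0 : ℝ)).congr_of_eventuallyEq ?_
    filter_upwards [Iio_mem_nhds hx] with y (hy : y < 0)
    simp [hy.le]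
  · rw [max_self]
    refine (hasDerivAt_const 0 (0 : ℝ)).of_eqOn_Iic_of_eqOn_Ici (by simpa using hsq 0) ?_ ?_
    · intro y (hy : y ≤ 0)
      simp [hy]
    · intro y (hy : 0 ≤ y)
      simp [hy]
  · rw [max_eq_left hx.le]
    refine (hsq x).congr_of_eventuallyEq ?_
    filter_upwards [Ioi_mem_nhds hx] with y (hy : 0 < y)
    simp [hy.le]

noncomputable def oneSidedHuber (c v : ℝ) : ℝ := max v 0 ^ 2 / 2 - max (v - c) 0 ^ 2 / 2

section oneSidedHuber

variable {c v : ℝ}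

theorem oneSidedHuber_of_nonpos (hc : 0 ≤ c) (hv : v ≤ 0) : oneSidedHuber c v = 0 := by
  rw [oneSidedHuber, max_eq_right hv, max_eq_right (by linarith)]
  ring

theorem oneSidedHuber_of_nonneg_of_le (hv₀ : 0 ≤ v) (hvc : v ≤ c) :
    oneSidedHuber c v = v ^ 2 / 2 := by
  rw [oneSidedHuber, max_eq_left hv₀, max_eq_right (by linarith)]
  ring

theorem oneSidedHuber_of_le (hc : 0 ≤ c) (hcv : c ≤ v) :
    oneSidedHuber c v = c * (v - c / 2) := by
  rw [oneSidedHuber, max_eq_left (by linarith), max_eq_left (by linarith)]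
  ring

theorem max_zero_sub_max_sub_zero (hc : 0 ≤ c) :
    max v 0 - max (v - c) 0 = min (max v 0) c := by
  rcases le_total v 0 with hv | hv
  · rw [max_eq_right hv, max_eq_right (by linarith), min_eq_left hc, sub_zero]
  rcases le_total v c with hvc | hcv
  · rw [max_eq_left hv, max_eq_right (by linarith), min_eq_left hvc, sub_zero]
  · rw [max_eq_left hv, max_eq_left (by linarith), min_eq_right hcv]
    ring

theorem hasDerivAt_oneSidedHuber (hc : 0 ≤ c) (v : ℝ) :
    HasDerivAt (oneSidedHuber c) (min (max v 0) c) v := by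
  have := (hasDerivAt_max_zero_sq_div_two v).sub
    ((hasDerivAt_max_zero_sq_div_two (v - c)).comp v ((hasDerivAt_id v).sub_const c))
  rwa [mul_one, max_zero_sub_max_sub_zero hc] at this

end oneSidedHuber

theorem genHuber_eq_oneSidedHuber {α a b : ℝ} (ha : 0 ≤ a) (hb : 0 ≤ b) (hα₀ : 0 ≤ α)
    (hα₁ : α ≤ 1) :
    genHuber α a b = fun u => (1 - α) * oneSidedHuber b u + α * oneSidedHuber a (-u) := by
  funext u
  unfold genHuber
  split_ifs with hua hbu hu
  · rw [oneSidedHuber_of_nonpos hb (by linarith), oneSidedHuber_of_le ha (by linarith)]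
    ring
  · rw [oneSidedHuber_of_le hb hbu.le, oneSidedHuber_of_nonpos ha (by linarith)]
    ring
  · rw [abs_of_nonneg (sub_nonneg.2 hα₁), oneSidedHuber_of_nonneg_of_le hu (not_lt.1 hbu),
      oneSidedHuber_of_nonpos ha (neg_nonpos.2 hu)]
    ring
  · rw [zero_sub, abs_neg, abs_of_nonneg hα₀, oneSidedHuber_of_nonpos hb (by linarith),
      oneSidedHuber_of_nonneg_of_le (by linarith) (by linarith)]
    ring

theorem kap_of_nonneg {a b u : ℝ} (ha : 0 ≤ a) (hb : 0 ≤ b) (hu : 0 ≤ u) :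
    kap a b u = min u b :=
  max_eq_left ((neg_nonpos.2 ha).trans (le_min hu hb))

theorem kap_of_nonpos {a b u : ℝ} (hb : 0 ≤ b) (hu : u ≤ 0) : kap a b u = -min (-u) a := by
  rw [kap, min_eq_left (hu.trans hb), ← max_neg_neg, neg_neg]

theorem abs_ite_sub_mul_kap {α a b : ℝ} (ha : 0 ≤ a) (hb : 0 ≤ b) (hα₀ : 0 ≤ α) (hα₁ : α ≤ 1)
    (u : ℝ) : |(if 0 ≤ u then (1 : ℝ) else 0) - α| * kap a b u =
      (1 - α) * min (max u 0) b - α * min (max (-u) 0) a := by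
  split_ifs with hu
  · rw [abs_of_nonneg (sub_nonneg.2 hα₁), kap_of_nonneg ha hb hu, max_eq_left hu,
      max_eq_right (neg_nonpos.2 hu), min_eq_left ha]
    ring
  · have hu : u ≤ 0 := (not_le.1 hu).le
    rw [zero_sub, abs_neg, abs_of_nonneg hα₀, kap_of_nonpos hb hu, max_eq_right hu,
      max_eq_left (neg_nonneg.2 hu), min_eq_left hb]
    ring

/-- The generalized Huber loss function is differentiable on ℝ with derivative
`(h^α_{a,b})'(u) = |𝟙_{u ≥ 0} - α| · κ_{a,b}(u)`. -/
theorem stmt0 (a b α : ℝ) (ha : 0 < a) (hb : 0 < b) (hα : α ∈ Set.Ioo (0 : ℝ) 1) (u : ℝ) :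
    HasDerivAt (genHuber α a b) (|(if 0 ≤ u then (1 : ℝ) else 0) - α| * kap a b u) u := by
  obtain ⟨hα₀, hα₁⟩ := hα
  rw [genHuber_eq_oneSidedHuber ha.le hb.le hα₀.le hα₁.le,
    abs_ite_sub_mul_kap ha.le hb.le hα₀.le hα₁.le]
  have hneg := (hasDerivAt_oneSidedHuber ha.le (-u)).comp u (hasDerivAt_neg u)
  exact (((hasDerivAt_oneSidedHuber hb.le u).const_mul (1 - α)).add
    (hneg.const_mul α)).congr_deriv (by ring)
end

section
/- For any Borel probability measure F on ℝ, a > 0, b > 0, and α ∈ (0,1), the Huber functional H^α_{a,b}(F) = {x ∈ ℝ : α·E_F[min((Y−x)₊, a)] = (1−α)·E_F[min((x−Y)₊, b)]} is a nonempty closed bounded interval contained in the smallest closed interval containing the support of F. -/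
open Set MeasureTheory Filter Topology

section Helpers

variable {μ : Measure ℝ} [IsProbabilityMeasure μ]

private lemma hub_nonneg {c t : ℝ} (hc : 0 ≤ c) : 0 ≤ min (max t 0) c :=
  le_min (le_max_right _ _) hc

private lemma hub_cont_pt (c x : ℝ) : Continuous (fun y : ℝ => min (max (y - x) 0) c) := by
  fun_prop

private lemma hub_cont_pt' (c x : ℝ) : Continuous (fun y : ℝ => min (max (x - y) 0) c) := by
  fun_prop

private lemma hub_integ1 (c x : ℝ) (hc : 0 ≤ c) :
    Integrable (fun y => min (max (y - x) 0) c) μ := by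
  refine (integrable_const c).mono' ((hub_cont_pt c x).aestronglyMeasurable) ?_
  filter_upwards with y
  rw [Real.norm_eq_abs, abs_of_nonneg (hub_nonneg hc)]
  exact min_le_right _ _

private lemma hub_integ2 (c x : ℝ) (hc : 0 ≤ c) :
    Integrable (fun y => min (max (x - y) 0) c) μ := by
  refine (integrable_const c).mono' ((hub_cont_pt' c x).aestronglyMeasurable) ?_
  filter_upwards with y
  rw [Real.norm_eq_abs, abs_of_nonneg (hub_nonneg hc)]
  exact min_le_right _ _

private lemma hub_lip (c s t : ℝ) : |min (max s 0) c - min (max t 0) c| ≤ |s - t| := by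
  refine (abs_min_sub_min_le_max _ _ _ _).trans ?_
  simpa using max_le (abs_max_sub_max_le_abs s t 0) (abs_nonneg (s - t))

private lemma hub_cont1 (c : ℝ) (hc : 0 ≤ c) :
    Continuous (fun x => ∫ y, min (max (y - x) 0) c ∂μ) := by
  refine LipschitzWith.continuous (K := 1) (LipschitzWith.of_dist_le_mul fun x x' => ?_)
  rw [Real.dist_eq, Real.dist_eq, ← integral_sub (hub_integ1 c x hc) (hub_integ1 c x' hc),
    NNReal.coe_one, one_mul]
  refine (norm_integral_le_integral_norm
    (fun y => min (max (y - x) 0) c - min (max (y - x') 0) c)).trans ?_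
  have : (∫ y, ‖min (max (y - x) 0) c - min (max (y - x') 0) c‖ ∂μ)
      ≤ ∫ _y, |x - x'| ∂μ := by
    refine integral_mono ((hub_integ1 c x hc).sub (hub_integ1 c x' hc)).abs
      (integrable_const _) fun y => ?_
    have := hub_lip c (y - x) (y - x')
    have h2 : |(y - x) - (y - x')| = |x' - x| := by ring_nf
    rw [h2] at this
    rwa [abs_sub_comm x' x] at this
  simpa [measure_univ] using this

private lemma hub_cont2 (c : ℝ) (hc : 0 ≤ c) :
    Continuous (fun x => ∫ y, min (max (x - y) 0) c ∂μ) := by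
  refine LipschitzWith.continuous (K := 1) (LipschitzWith.of_dist_le_mul fun x x' => ?_)
  rw [Real.dist_eq, Real.dist_eq, ← integral_sub (hub_integ2 c x hc) (hub_integ2 c x' hc),
    NNReal.coe_one, one_mul]
  refine (norm_integral_le_integral_norm
    (fun y => min (max (x - y) 0) c - min (max (x' - y) 0) c)).trans ?_
  have : (∫ y, ‖min (max (x - y) 0) c - min (max (x' - y) 0) c‖ ∂μ)
      ≤ ∫ _y, |x - x'| ∂μ := by
    refine integral_mono ((hub_integ2 c x hc).sub (hub_integ2 c x' hc)).abs
      (integrable_const _) fun y => ?_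
    have := hub_lip c (x - y) (x' - y)
    have h2 : |(x - y) - (x' - y)| = |x - x'| := by ring_nf
    rwa [h2] at this
  simpa [measure_univ] using this

private lemma hub_kmono (c : ℝ) : Monotone (fun t : ℝ => min (max t 0) c) :=
  ((monotone_id.max monotone_const).min monotone_const)

private lemma hub_anti1 (c : ℝ) (hc : 0 ≤ c) :
    Antitone (fun x => ∫ y, min (max (y - x) 0) c ∂μ) := by
  intro x x' h
  refine integral_mono (hub_integ1 c x' hc) (hub_integ1 c x hc) fun y => ?_
  exact hub_kmono c (by linarith : y - x' ≤ y - x)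

private lemma hub_mono2 (c : ℝ) (hc : 0 ≤ c) :
    Monotone (fun x => ∫ y, min (max (x - y) 0) c ∂μ) := by
  intro x x' h
  refine integral_mono (hub_integ2 c x hc) (hub_integ2 c x' hc) fun y => ?_
  exact hub_kmono c (by linarith : x - y ≤ x' - y)

private lemma hub_tendsto1_bot (c : ℝ) (hc : 0 < c) :
    Tendsto (fun x => ∫ y, min (max (y - x) 0) c ∂μ) atBot (𝓝 c) := by
  have := MeasureTheory.tendsto_integral_filter_of_dominated_convergence (μ := μ)
    (l := atBot) (F := fun x y => min (max (y - x) 0) c) (f := fun _ => c)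
    (bound := fun _ => c)
    (Eventually.of_forall fun x => (hub_cont_pt c x).aestronglyMeasurable)
    (Eventually.of_forall fun x => Eventually.of_forall fun y => by
      rw [Real.norm_eq_abs, abs_of_nonneg (hub_nonneg hc.le)]; exact min_le_right _ _)
    (integrable_const c)
    (Eventually.of_forall fun y => by
      refine Tendsto.congr' ?_ tendsto_const_nhds
      filter_upwards [eventually_le_atBot (y - c)] with x hx
      have h1 : c ≤ y - x := by linarith
      rw [max_eq_left (hc.le.trans h1), min_eq_right h1])
  simpa [measure_univ] using this

private lemma hub_tendsto1_top (c : ℝ) (hc : 0 < c) :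
    Tendsto (fun x => ∫ y, min (max (y - x) 0) c ∂μ) atTop (𝓝 0) := by
  have := MeasureTheory.tendsto_integral_filter_of_dominated_convergence (μ := μ)
    (l := atTop) (F := fun x y => min (max (y - x) 0) c) (f := fun _ => 0)
    (bound := fun _ => c)
    (Eventually.of_forall fun x => (hub_cont_pt c x).aestronglyMeasurable)
    (Eventually.of_forall fun x => Eventually.of_forall fun y => by
      rw [Real.norm_eq_abs, abs_of_nonneg (hub_nonneg hc.le)]; exact min_le_right _ _)
    (integrable_const c)
    (Eventually.of_forall fun y => by
      refine Tendsto.congr' ?_ tendsto_const_nhds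
      filter_upwards [eventually_ge_atTop y] with x hx
      rw [max_eq_right (by linarith : y - x ≤ 0), min_eq_left hc.le])
  simpa using this

private lemma hub_tendsto2_bot (c : ℝ) (hc : 0 < c) :
    Tendsto (fun x => ∫ y, min (max (x - y) 0) c ∂μ) atBot (𝓝 0) := by
  have := MeasureTheory.tendsto_integral_filter_of_dominated_convergence (μ := μ)
    (l := atBot) (F := fun x y => min (max (x - y) 0) c) (f := fun _ => 0)
    (bound := fun _ => c)
    (Eventually.of_forall fun x => (hub_cont_pt' c x).aestronglyMeasurable)
    (Eventually.of_forall fun x => Eventually.of_forall fun y => by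
      rw [Real.norm_eq_abs, abs_of_nonneg (hub_nonneg hc.le)]; exact min_le_right _ _)
    (integrable_const c)
    (Eventually.of_forall fun y => by
      refine Tendsto.congr' ?_ tendsto_const_nhds
      filter_upwards [eventually_le_atBot y] with x hx
      rw [max_eq_right (by linarith : x - y ≤ 0), min_eq_left hc.le])
  simpa using this

private lemma hub_tendsto2_top (c : ℝ) (hc : 0 < c) :
    Tendsto (fun x => ∫ y, min (max (x - y) 0) c ∂μ) atTop (𝓝 c) := by
  have := MeasureTheory.tendsto_integral_filter_of_dominated_convergence (μ := μ)
    (l := atTop) (F := fun x y => min (max (x - y) 0) c) (f := fun _ => c)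
    (bound := fun _ => c)
    (Eventually.of_forall fun x => (hub_cont_pt' c x).aestronglyMeasurable)
    (Eventually.of_forall fun x => Eventually.of_forall fun y => by
      rw [Real.norm_eq_abs, abs_of_nonneg (hub_nonneg hc.le)]; exact min_le_right _ _)
    (integrable_const c)
    (Eventually.of_forall fun y => by
      refine Tendsto.congr' ?_ tendsto_const_nhds
      filter_upwards [eventually_ge_atTop (y + c)] with x hx
      have h1 : c ≤ x - y := by linarith
      rw [max_eq_left (hc.le.trans h1), min_eq_right h1])
  simpa [measure_univ] using this

end Helpers

/-- The Huber functional `H^α_{a,b}(F)` is a nonempty closed bounded interval contained in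
the smallest closed interval containing the support of the measure `F`. -/
theorem stmt5 (a b α : ℝ) (ha : 0 < a) (hb : 0 < b) (hα : α ∈ Set.Ioo (0 : ℝ) 1)
    (μ : Measure ℝ) [IsProbabilityMeasure μ] :
    {x : ℝ | α * ∫ y, min (max (y - x) 0) a ∂μ
        = (1 - α) * ∫ y, min (max (x - y) 0) b ∂μ}.Nonempty ∧
    IsClosed {x : ℝ | α * ∫ y, min (max (y - x) 0) a ∂μ
        = (1 - α) * ∫ y, min (max (x - y) 0) b ∂μ} ∧
    Bornology.IsBounded {x : ℝ | α * ∫ y, min (max (y - x) 0) a ∂μ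
        = (1 - α) * ∫ y, min (max (x - y) 0) b ∂μ} ∧
    Set.OrdConnected {x : ℝ | α * ∫ y, min (max (y - x) 0) a ∂μ
        = (1 - α) * ∫ y, min (max (x - y) 0) b ∂μ} ∧
    (∀ s : Set ℝ, IsClosed s → s.OrdConnected → μ sᶜ = 0 →
      {x : ℝ | α * ∫ y, min (max (y - x) 0) a ∂μ
        = (1 - α) * ∫ y, min (max (x - y) 0) b ∂μ} ⊆ s) := by
  obtain ⟨hα0, hα1⟩ := hα
  have hα1' : 0 < 1 - α := by linarith
  set g : ℝ → ℝ := fun x =>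
    α * (∫ y, min (max (y - x) 0) a ∂μ) - (1 - α) * ∫ y, min (max (x - y) 0) b ∂μ with hgdef
  have hset : {x : ℝ | α * ∫ y, min (max (y - x) 0) a ∂μ
      = (1 - α) * ∫ y, min (max (x - y) 0) b ∂μ} = g ⁻¹' {0} := by
    ext x
    simp only [mem_setOf_eq, Set.mem_preimage, Set.mem_singleton_iff, hgdef, sub_eq_zero]
  have hcontg : Continuous g :=
    (continuous_const.mul (hub_cont1 a ha.le)).sub (continuous_const.mul (hub_cont2 b hb.le))
  have hanti : Antitone g := by
    intro x y hxy
    have h1 := hub_anti1 (μ := μ) a ha.le hxy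
    have h2 := hub_mono2 (μ := μ) b hb.le hxy
    simp only [hgdef]
    have := mul_le_mul_of_nonneg_left h1 hα0.le
    have := mul_le_mul_of_nonneg_left h2 hα1'.le
    linarith
  have htb : Tendsto g atBot (𝓝 (α * a)) := by
    have := ((hub_tendsto1_bot (μ := μ) a ha).const_mul α).sub
      ((hub_tendsto2_bot (μ := μ) b hb).const_mul (1 - α))
    simpa using this
  have htt : Tendsto g atTop (𝓝 (-((1 - α) * b))) := by
    have := ((hub_tendsto1_top (μ := μ) a ha).const_mul α).sub
      ((hub_tendsto2_top (μ := μ) b hb).const_mul (1 - α))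
    simpa using this
  obtain ⟨X, hX⟩ := eventually_atBot.1 (htb.eventually_const_lt (by positivity : (0:ℝ) < α * a))
  obtain ⟨Y, hY⟩ := eventually_atTop.1
    (htt.eventually_lt_const (by nlinarith : -((1 - α) * b) < 0))
  refine ⟨?_, ?_, ?_, ?_, ?_⟩
  · -- Nonempty
    rw [hset]
    have h1 : 0 < g (min X Y) := hX _ (min_le_left _ _)
    have h2 : g (max X Y) < 0 := hY _ (le_max_right _ _)
    have := intermediate_value_Icc' (min_le_max (a := X) (b := Y)) hcontg.continuousOn
    obtain ⟨x, _, hx⟩ := this ⟨h2.le, h1.le⟩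
    exact ⟨x, by simpa using hx⟩
  · rw [hset]
    exact isClosed_singleton.preimage hcontg
  · rw [hset]
    refine (Metric.isBounded_Icc X Y).subset fun x hx => ?_
    simp only [Set.mem_preimage, Set.mem_singleton_iff] at hx
    constructor
    · by_contra h
      push_neg at h
      exact absurd hx (hX x h.le).ne'
    · by_contra h
      push_neg at h
      exact absurd hx (hY x h.le).ne
  · rw [hset]
    refine ⟨fun x hx y hy z hz => ?_⟩
    simp only [Set.mem_preimage, Set.mem_singleton_iff] at hx hy ⊢
    have hle : g z ≤ 0 := hx ▸ hanti hz.1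
    have hge : 0 ≤ g z := hy ▸ hanti hz.2
    linarith
  · -- subset of support interval
    intro s hsc hso hsn x hx
    simp only [mem_setOf_eq] at hx
    by_contra hxs
    have hsne : s.Nonempty := by
      rcases s.eq_empty_or_nonempty with h | h
      · rw [h, Set.compl_empty, measure_univ] at hsn
        exact (one_ne_zero hsn).elim
      · exact h
    obtain ⟨ε, hε, hball⟩ := Metric.isOpen_iff.1 hsc.isOpen_compl x hxs
    have hae : ∀ᵐ y ∂μ, y ∈ s := by
      rw [ae_iff]
      exact hsn
    by_cases hcase : ∃ y ∈ s, y ≤ x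
    · by_cases hcase2 : ∃ y ∈ s, x ≤ y
      · obtain ⟨y₁, hy₁s, hy₁⟩ := hcase
        obtain ⟨y₂, hy₂s, hy₂⟩ := hcase2
        exact hxs (hso.out hy₁s hy₂s ⟨hy₁, hy₂⟩)
      · push_neg at hcase2
        have hsub : ∀ y ∈ s, y ≤ x - ε := by
          intro y hy
          have h1 := hcase2 y hy
          have h2 : y ∉ Metric.ball x ε := fun hmem => hball hmem hy
          rw [Metric.mem_ball, Real.dist_eq] at h2
          push_neg at h2
          rw [abs_of_nonpos (by linarith)] at h2
          linarith
        have h1 : (∫ y, min (max (y - x) 0) a ∂μ) = 0 := by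
          have heq : (fun y => min (max (y - x) 0) a) =ᵐ[μ] (fun _ => (0:ℝ)) := by
            filter_upwards [hae] with y hy
            have := hsub y hy
            rw [max_eq_right (by linarith : y - x ≤ 0), min_eq_left ha.le]
          rw [integral_congr_ae heq, integral_zero]
        have h2 : min ε b ≤ ∫ y, min (max (x - y) 0) b ∂μ := by
          have hle : (∫ _y, min ε b ∂μ) ≤ ∫ y, min (max (x - y) 0) b ∂μ := by
            refine integral_mono_ae (integrable_const _) (hub_integ2 b x hb.le) ?_
            filter_upwards [hae] with y hy
            have hyx := hsub y hy
            calc min ε b ≤ min (x - y) b := min_le_min (by linarith) le_rfl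
              _ ≤ min (max (x - y) 0) b := min_le_min (le_max_left _ _) le_rfl
          simpa [measure_univ] using hle
        rw [h1, mul_zero] at hx
        exact absurd hx (mul_pos hα1' ((lt_min hε hb).trans_le h2)).ne
    · push_neg at hcase
      have hsub : ∀ y ∈ s, x + ε ≤ y := by
        intro y hy
        have h1 := hcase y hy
        have h2 : y ∉ Metric.ball x ε := fun hmem => hball hmem hy
        rw [Metric.mem_ball, Real.dist_eq] at h2
        push_neg at h2
        rw [abs_of_nonneg (by linarith)] at h2
        linarith
      have h1 : (∫ y, min (max (x - y) 0) b ∂μ) = 0 := by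
        have heq : (fun y => min (max (x - y) 0) b) =ᵐ[μ] (fun _ => (0:ℝ)) := by
          filter_upwards [hae] with y hy
          have := hsub y hy
          rw [max_eq_right (by linarith : x - y ≤ 0), min_eq_left hb.le]
        rw [integral_congr_ae heq, integral_zero]
      have h2 : min ε a ≤ ∫ y, min (max (y - x) 0) a ∂μ := by
        have hle : (∫ _y, min ε a ∂μ) ≤ ∫ y, min (max (y - x) 0) a ∂μ := by
          refine integral_mono_ae (integrable_const _) (hub_integ1 a x ha.le) ?_
          filter_upwards [hae] with y hy
          have hyx := hsub y hy
          calc min ε a ≤ min (y - x) a := min_le_min (by linarith) le_rfl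
            _ ≤ min (max (y - x) 0) a := min_le_min (le_max_left _ _) le_rfl
        simpa [measure_univ] using hle
      rw [h1, mul_zero] at hx
      exact absurd hx (mul_pos hα0 ((lt_min hε ha).trans_le h2)).ne'
end

section
/- Suppose F is a CDF on ℝ and the Huber functional H^α_{a,b}(F) equals [c, d] with c < d. Then there exists w ∈ (0,1) such that F(t) = w for all t in the open interval (c − b, d + a), and α = b·w / (b·w + a·(1 − w)). -/
open Set MeasureTheory Filter Topology

/-!
Write `x ∈ H^α_{a,b}(F)` as `Φ x = α a` with `Φ x = α ∫_x^{x+a} F + (1-α) ∫_{x-b}^x F`.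
For `0 < h ≤ min a b` the increment `Φ (x+h) - Φ x` is a positive combination of
`∫_{x+a}^{x+a+h} F - ∫_x^{x+h} F ≥ h (F (x+a) - F (x+h)) ≥ 0` and
`∫_x^{x+h} F - ∫_{x-b}^{x-b+h} F ≥ h (F x - F (x-b+h)) ≥ 0`.
If `x` and `x + h` both lie in `[c, d]` the increment vanishes, so `F` is constant on
`(x - b, x + a)` for every `x ∈ [c, d)`. These intervals cover the connected set
`(c - b, d + a)`, on which `F` is therefore constant, say `w`, and the defining equation at any
point of `(c, d)` becomes `α a (1 - w) = (1 - α) b w`.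
-/

theorem IsPreconnected.apply_eq_of_eventually_eq {X Y : Type*} [TopologicalSpace X] {s : Set X}
    (hs : IsPreconnected s) {f : X → Y} (hf : ∀ x ∈ s, ∀ᶠ y in 𝓝[s] x, f y = f x)
    {x y : X} (hx : x ∈ s) (hy : y ∈ s) : f x = f y := by
  have := isPreconnected_iff_preconnectedSpace.mp hs
  have hloc : IsLocallyConstant (s.domRestrict f) :=
    (IsLocallyConstant.iff_eventually_eq _).2 fun z =>
      (eventually_nhds_subtype_iff s z _).2 (hf z z.2)
  exact hloc.apply_eq_of_preconnectedSpace ⟨x, hx⟩ ⟨y, hy⟩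

theorem Monotone.mul_sub_le_intervalIntegral_sub {f : ℝ → ℝ} (hf : Monotone f) {u v h : ℝ}
    (hh : 0 ≤ h) :
    h * (f v - f (u + h)) ≤ (∫ t in v..v + h, f t) - ∫ t in u..u + h, f t := by
  have hu : ∫ t in u..u + h, f t ≤ ∫ t in u..u + h, f (u + h) :=
    intervalIntegral.integral_mono_on (by linarith) hf.intervalIntegrable
      intervalIntegrable_const fun t ht => hf ht.2
  have hv : ∫ t in v..v + h, f v ≤ ∫ t in v..v + h, f t :=
    intervalIntegral.integral_mono_on (by linarith) intervalIntegrable_const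
      hf.intervalIntegrable fun t ht => hf ht.1
  simp only [intervalIntegral.integral_const, smul_eq_mul, add_sub_cancel_left] at hu hv
  linarith

theorem intervalIntegral.integral_eq_mul_of_eqOn_const {f : ℝ → ℝ} {u v w : ℝ}
    (h : EqOn f (fun _ => w) (uIcc u v)) : ∫ t in u..v, f t = (v - u) * w := by
  rw [intervalIntegral.integral_congr h, intervalIntegral.integral_const, smul_eq_mul]

theorem mem_Ioo_and_eq_div_of_mul_one_sub_eq {α a b w : ℝ} (ha : 0 < a) (hb : 0 < b)
    (hα : α ∈ Ioo 0 1) (h : α * (a * (1 - w)) = (1 - α) * (b * w)) :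
    w ∈ Ioo 0 1 ∧ α = b * w / (b * w + a * (1 - w)) := by
  obtain ⟨hα₀, hα₁⟩ := hα
  have hw₀ : 0 < w := by nlinarith [mul_pos hα₀ ha, mul_pos (sub_pos.2 hα₁) hb]
  have hw₁ : w < 1 := by nlinarith [mul_pos hα₀ ha, mul_pos (sub_pos.2 hα₁) hb]
  refine ⟨⟨hw₀, hw₁⟩, (eq_div_iff ?_).2 (by linarith)⟩
  nlinarith

theorem exists_mem_Ico_mem_Ioo_sub_add {a b c d y : ℝ} (hab : 0 < a + b) (hcd : c < d)
    (hy : y ∈ Ioo (c - b) (d + a)) : ∃ x ∈ Ico c d, y ∈ Ioo (x - b) (x + a) := by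
  obtain ⟨hy₁, hy₂⟩ := hy
  rcases lt_or_ge (y - a) c with hya | hya
  · exact ⟨c, ⟨le_rfl, hcd⟩, by linarith, by linarith⟩
  · obtain ⟨x, hx₁, hx₂⟩ := exists_between (lt_min (by linarith) (by linarith) :
      y - a < min d (y + b))
    exact ⟨x, ⟨by linarith, hx₂.trans_le (min_le_left _ _)⟩,
      by linarith [min_le_right d (y + b)], by linarith⟩

/-- The Huber functional `H^α_{a,b}(F)`. -/
def huberSet (α a b : ℝ) (F : ℝ → ℝ) : Set ℝ :=
  {x | α * ∫ t in x..(x + a), (1 - F t) = (1 - α) * ∫ t in (x - b)..x, F t}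

namespace Monotone

variable {α a b : ℝ} {F : ℝ → ℝ}

theorem mem_huberSet_iff (hF : Monotone F) {x : ℝ} :
    x ∈ huberSet α a b F ↔
      α * (∫ t in x..x + a, F t) + (1 - α) * (∫ t in x - b..x, F t) = α * a := by
  rw [huberSet, mem_ofPred_eq, intervalIntegral.integral_sub intervalIntegrable_const
    hF.intervalIntegrable, intervalIntegral.integral_const, smul_eq_mul, add_sub_cancel_left]
  constructor <;> intro h <;> linarith

theorem eq_of_mem_huberSet_of_add_mem (hF : Monotone F) (hα : α ∈ Ioo 0 1) {x h : ℝ}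
    (hx : x ∈ huberSet α a b F) (hxh : x + h ∈ huberSet α a b F)
    (hh : 0 < h) (hha : h ≤ a) (hhb : h ≤ b) :
    F (x - b + h) = F x ∧ F (x + h) = F (x + a) := by
  rw [hF.mem_huberSet_iff] at hx hxh
  have hshift : ∀ p q, (∫ t in p + h..q + h, F t) - ∫ t in p..q, F t =
      (∫ t in q..q + h, F t) - ∫ t in p..p + h, F t := fun p q =>
    intervalIntegral.integral_interval_sub_interval_comm' hF.intervalIntegrable
      hF.intervalIntegrable hF.intervalIntegrable
  have hright := hF.mul_sub_le_intervalIntegral_sub (u := x) (v := x + a) hh.le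
  have hleft := hF.mul_sub_le_intervalIntegral_sub (u := x - b) (v := x) hh.le
  have hsum : α * ((∫ t in x + a..x + a + h, F t) - ∫ t in x..x + h, F t) +
      (1 - α) * ((∫ t in x..x + h, F t) - ∫ t in x - b..x - b + h, F t) = 0 := by
    have h₁ := hshift x (x + a)
    have h₂ := hshift (x - b) x
    rw [add_right_comm x h a, ← sub_add_eq_add_sub] at hxh
    linear_combination hxh - hx - α * h₁ - (1 - α) * h₂
  have hP : 0 ≤ F (x + a) - F (x + h) := sub_nonneg.2 (hF (by linarith))
  have hQ : 0 ≤ F x - F (x - b + h) := sub_nonneg.2 (hF (by linarith))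
  have hαh : 0 < α * h := mul_pos hα.1 hh
  have hαh' : 0 < (1 - α) * h := mul_pos (sub_pos.2 hα.2) hh
  have hle : α * h * (F (x + a) - F (x + h)) + (1 - α) * h * (F x - F (x - b + h)) ≤ 0 := by
    linarith [mul_le_mul_of_nonneg_left hright hα.1.le,
      mul_le_mul_of_nonneg_left hleft (sub_pos.2 hα.2).le]
  constructor <;> nlinarith [mul_nonneg hαh.le hP, mul_nonneg hαh'.le hQ]

variable {c d : ℝ}

theorem eq_of_mem_Ioc_of_Icc_subset_huberSet (hF : Monotone F) (hα : α ∈ Ioo 0 1) (ha : 0 < a)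
    (hH : Icc c d ⊆ huberSet α a b F) {x y : ℝ} (hx : x ∈ Ico c d) (hy : y ∈ Ioc (x - b) x) :
    F y = F x := by
  set h := min (min a (d - x)) (y - (x - b))
  have hh : 0 < h := lt_min (lt_min ha (by linarith [hx.2])) (by linarith [hy.1])
  have hha : h ≤ a := (min_le_left _ _).trans (min_le_left _ _)
  have hhd : h ≤ d - x := (min_le_left _ _).trans (min_le_right _ _)
  have hhy : h ≤ y - (x - b) := min_le_right _ _
  obtain ⟨hflat, -⟩ := hF.eq_of_mem_huberSet_of_add_mem hα (hH ⟨hx.1, hx.2.le⟩)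
    (hH ⟨by linarith [hx.1], by linarith⟩) hh hha (by linarith [hy.2])
  exact le_antisymm (hF hy.2) (hflat ▸ hF (by linarith))

theorem eqOn_Ioo_of_mem_Ico_of_Icc_subset_huberSet (hF : Monotone F) (hα : α ∈ Ioo 0 1)
    (ha : 0 < a) (hb : 0 < b) (hH : Icc c d ⊆ huberSet α a b F) {x : ℝ} (hx : x ∈ Ico c d) :
    EqOn F (fun _ => F x) (Ioo (x - b) (x + a)) := by
  intro y hy
  rcases le_or_gt y x with hyx | hxy
  · exact hF.eq_of_mem_Ioc_of_Icc_subset_huberSet hα ha hH hx ⟨hy.1, hyx⟩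
  set h := min (min (b / 2) ((d - x) / 2)) (y - x)
  have hh : 0 < h := lt_min (lt_min (by linarith) (by linarith [hx.2])) (by linarith)
  have hhb : h ≤ b / 2 := (min_le_left _ _).trans (min_le_left _ _)
  have hhd : h ≤ (d - x) / 2 := (min_le_left _ _).trans (min_le_right _ _)
  have hhy' : x + h ≤ y := by linarith [min_le_right (min (b / 2) ((d - x) / 2)) (y - x)]
  have hxh : x + h ∈ Ico c d := ⟨by linarith [hx.1], by linarith [hx.2]⟩
  obtain ⟨-, hflat⟩ := hF.eq_of_mem_huberSet_of_add_mem hα (hH ⟨hx.1, hx.2.le⟩)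
    (hH ⟨hxh.1, hxh.2.le⟩) hh (by linarith [hy.2]) (by linarith)
  have hstep : F x = F (x + h) :=
    hF.eq_of_mem_Ioc_of_Icc_subset_huberSet hα ha hH hxh ⟨by linarith, by linarith⟩
  rw [hstep]
  exact le_antisymm (hflat ▸ hF hy.2.le) (hF hhy')

theorem eqOn_Ioo_of_Icc_subset_huberSet (hF : Monotone F) (hα : α ∈ Ioo 0 1) (ha : 0 < a)
    (hb : 0 < b) (hcd : c < d) (hH : Icc c d ⊆ huberSet α a b F) :
    EqOn F (fun _ => F c) (Ioo (c - b) (d + a)) := by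
  have hlocal : ∀ y ∈ Ioo (c - b) (d + a), ∀ᶠ z in 𝓝[Ioo (c - b) (d + a)] y, F z = F y := by
    intro y hy
    obtain ⟨x, hx, hyx⟩ := exists_mem_Ico_mem_Ioo_sub_add (by linarith) hcd hy
    have hconst := hF.eqOn_Ioo_of_mem_Ico_of_Icc_subset_huberSet hα ha hb hH hx
    filter_upwards [nhdsWithin_le_nhds (Ioo_mem_nhds hyx.1 hyx.2)] with z hz
    rw [hconst hz, hconst hyx]
  exact fun y hy => isPreconnected_Ioo.apply_eq_of_eventually_eq hlocal hy
    ⟨by linarith, by linarith⟩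

end Monotone

theorem stmt6_general (a b α c d : ℝ) (ha : 0 < a) (hb : 0 < b) (hα : α ∈ Set.Ioo (0 : ℝ) 1)
    (F : ℝ → ℝ) (hmono : Monotone F)
    (hcd : c < d)
    (hH : {x : ℝ | α * ∫ t in x..(x + a), (1 - F t)
        = (1 - α) * ∫ t in (x - b)..x, F t} = Set.Icc c d) :
    ∃ w ∈ Set.Ioo (0 : ℝ) 1, (∀ t ∈ Set.Ioo (c - b) (d + a), F t = w) ∧
      α = b * w / (b * w + a * (1 - w)) := by
  have hsub : Icc c d ⊆ huberSet α a b F := hH.ge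
  have hconst := hmono.eqOn_Ioo_of_Icc_subset_huberSet hα ha hb hcd hsub
  have hbalance : α * (a * (1 - F c)) = (1 - α) * (b * F c) := by
    obtain ⟨m, hcm, hmd⟩ := exists_between hcd
    have hm : m ∈ huberSet α a b F := hsub ⟨hcm.le, hmd.le⟩
    have hright : ∫ t in m..m + a, (1 - F t) = a * (1 - F c) := by
      rw [intervalIntegral.integral_eq_mul_of_eqOn_const fun t ht => by
        rw [uIcc_of_le (by linarith)] at ht
        rw [hconst ⟨by linarith [ht.1], by linarith [ht.2]⟩], add_sub_cancel_left]
    have hleft : ∫ t in m - b..m, F t = b * F c := by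
      rw [intervalIntegral.integral_eq_mul_of_eqOn_const fun t ht => by
        rw [uIcc_of_le (by linarith)] at ht
        exact hconst ⟨by linarith [ht.1], by linarith [ht.2]⟩, sub_sub_cancel]
    rwa [huberSet, mem_ofPred_eq, hright, hleft] at hm
  obtain ⟨hw, hα_eq⟩ := mem_Ioo_and_eq_div_of_mul_one_sub_eq ha hb hα hbalance
  exact ⟨F c, hw, hconst, hα_eq⟩

/-- If the Huber functional of a CDF `F` is a nondegenerate interval `[c,d]`, then `F` is
constant, with value `w`, on `(c−b, d+a)`, and `α = bw/(bw + a(1−w))`. -/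
theorem stmt6 (a b α c d : ℝ) (ha : 0 < a) (hb : 0 < b) (hα : α ∈ Set.Ioo (0 : ℝ) 1)
    (F : ℝ → ℝ) (hmono : Monotone F) (h0 : ∀ t, 0 ≤ F t) (h1 : ∀ t, F t ≤ 1)
    (hrc : ∀ x, ContinuousWithinAt F (Set.Ici x) x)
    (hbot : Tendsto F atBot (nhds 0)) (htop : Tendsto F atTop (nhds 1))
    (hcd : c < d)
    (hH : {x : ℝ | α * ∫ t in x..(x + a), (1 - F t)
        = (1 - α) * ∫ t in (x - b)..x, F t} = Set.Icc c d) :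
    ∃ w ∈ Set.Ioo (0 : ℝ) 1, (∀ t ∈ Set.Ioo (c - b) (d + a), F t = w) ∧
      α = b * w / (b * w + a * (1 - w)) :=
  stmt6_general a b α c d ha hb hα F hmono hcd hH
end

section
/- Suppose F is a CDF on ℝ that is constant equal to w ∈ (0,1) on an interval (c₀, d₀) with d₀ − c₀ > a + b, where (c₀, d₀) is a maximal such interval (F < w to the left of c₀ and F > w to the right of d₀ in the appropriate limiting sense). Then for α = b·w/(b·w + a·(1−w)), the Huber functional H^α_{a,b}(F) equals [c₀ + b, d₀ − a]. -/
/-!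
Below `c₀ + b` the window `[x - b, x]` meets the region where `F < w`, so `∫_{x-b}^x F < b w`,
while `F ≤ w` on `[x, x + a]` gives `∫_x^{x+a} (1 - F) ≥ a (1 - w)`; with the given `α` the two
sides of `G(x) = 0` then differ. Symmetrically above `d₀ - a`. On `[c₀ + b, d₀ - a]` both windows
lie in the flat piece, where the choice of `α` makes the two sides equal.
-/

open Set MeasureTheory Filter Topology intervalIntegral

lemma div_add_mul_eq_one_sub_div_add_mul_iff {A B : ℝ} (hAB : B + A ≠ 0) (p q : ℝ) :
    B / (B + A) * p = (1 - B / (B + A)) * q ↔ B * p = A * q := by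
  rw [show 1 - B / (B + A) = A / (B + A) by field_simp; ring, div_mul_eq_mul_div,
    div_mul_eq_mul_div, div_left_inj' hAB]

namespace intervalIntegral

variable {f : ℝ → ℝ} {u v M : ℝ}

lemma integral_eq_mul_of_forall_Ioo_eq (huv : u ≤ v) (h : ∀ t ∈ Ioo u v, f t = M) :
    ∫ t in u..v, f t = (v - u) * M := by
  rw [integral_of_le huv, integral_Ioc_eq_integral_Ioo, setIntegral_congr_fun measurableSet_Ioo h,
    setIntegral_const, Real.volume_real_Ioo_of_le huv, smul_eq_mul]

lemma mul_le_integral_of_forall_Icc_le (huv : u ≤ v) (hf : IntervalIntegrable f volume u v)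
    (h : ∀ t ∈ Icc u v, M ≤ f t) : (v - u) * M ≤ ∫ t in u..v, f t := by
  simpa [mul_comm] using integral_mono_on huv intervalIntegrable_const hf h

lemma integral_lt_mul_of_forall_Ioo_le_of_lt {p q : ℝ} (huv : u ≤ v)
    (hf : IntervalIntegrable f volume u v) (hle : ∀ t ∈ Ioo u v, f t ≤ M) (hpq : p < q)
    (hsub : Ioo p q ⊆ Ioo u v) (hlt : ∀ t ∈ Ioo p q, f t < M) :
    ∫ t in u..v, f t < (v - u) * M := by
  have hconst : ∫ _ in u..v, M = (v - u) * M := by simp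
  rw [← hconst]
  refine integral_lt_integral_of_ae_le_of_measure_setOfPred_lt_ne_zero huv hf
    intervalIntegrable_const ?_ ?_
  · rw [Measure.restrict_congr_set Ioo_ae_eq_Ioc.symm]
    exact ae_restrict_of_forall_mem measurableSet_Ioo hle
  · refine (lt_of_lt_of_le ?_ (measure_mono (s := Ioo p q) hlt)).ne'
    rw [Measure.restrict_apply' measurableSet_Ioc, inter_eq_left.2
      (hsub.trans Ioo_subset_Ioc_self)]
    simpa using hpq

end intervalIntegral

section FlatPiece

variable {F : ℝ → ℝ} {w c d : ℝ}

lemma Monotone.le_of_lt_of_forall_Ioo_eq (hmono : Monotone F) (hconst : ∀ t ∈ Ioo c d, F t = w)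
    (hcd : c < d) {t : ℝ} (ht : t < d) : F t ≤ w := by
  obtain ⟨s, hs, hsd⟩ := exists_between (max_lt ht hcd)
  exact hconst s ⟨(le_max_right _ _).trans_lt hs, hsd⟩ ▸ hmono ((le_max_left _ _).trans hs.le)

lemma Monotone.ge_of_lt_of_forall_Ioo_eq (hmono : Monotone F) (hconst : ∀ t ∈ Ioo c d, F t = w)
    (hcd : c < d) {t : ℝ} (ht : c < t) : w ≤ F t := by
  obtain ⟨s, hcs, hs⟩ := exists_between (lt_min ht hcd)
  exact hconst s ⟨hcs, hs.trans_le (min_le_right _ _)⟩ ▸ hmono (hs.le.trans (min_le_left _ _))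

variable (hmono : Monotone F) (hconst : ∀ t ∈ Ioo c d, F t = w) (hcd : c < d) {u v : ℝ}
include hmono hconst hcd

lemma integral_lt_mul_of_lt_left_end (hleft : ∀ t < c, F t < w) (huv : u < v)
    (huc : u < c) (hvd : v ≤ d) : ∫ t in u..v, F t < (v - u) * w :=
  integral_lt_mul_of_forall_Ioo_le_of_lt huv.le hmono.intervalIntegrable
    (fun _ ht => hmono.le_of_lt_of_forall_Ioo_eq hconst hcd (ht.2.trans_le hvd))
    (lt_min huv huc) (Ioo_subset_Ioo_right (min_le_left _ _))
    (fun t ht => hleft t (ht.2.trans_le (min_le_right _ _)))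

lemma integral_one_sub_lt_mul_of_right_end_lt (hright : ∀ t, d < t → w < F t)
    (huv : u < v) (hcu : c ≤ u) (hdv : d < v) : ∫ t in u..v, (1 - F t) < (v - u) * (1 - w) :=
  integral_lt_mul_of_forall_Ioo_le_of_lt huv.le
    (intervalIntegrable_const.sub hmono.intervalIntegrable)
    (fun t ht => by linarith [hmono.ge_of_lt_of_forall_Ioo_eq hconst hcd (hcu.trans_lt ht.1)])
    (max_lt huv hdv) (Ioo_subset_Ioo_left (le_max_left _ _))
    (fun t ht => by linarith [hright t ((le_max_right _ _).trans_lt ht.1)])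

lemma mul_le_integral_of_left_end_lt (huv : u ≤ v) (hcu : c < u) :
    (v - u) * w ≤ ∫ t in u..v, F t :=
  mul_le_integral_of_forall_Icc_le huv hmono.intervalIntegrable
    fun _ ht => hmono.ge_of_lt_of_forall_Ioo_eq hconst hcd (hcu.trans_le ht.1)

lemma mul_le_integral_one_sub_of_lt_right_end (huv : u ≤ v) (hvd : v < d) :
    (v - u) * (1 - w) ≤ ∫ t in u..v, (1 - F t) :=
  mul_le_integral_of_forall_Icc_le huv (intervalIntegrable_const.sub hmono.intervalIntegrable)
    fun t ht => by linarith [hmono.le_of_lt_of_forall_Ioo_eq hconst hcd (ht.2.trans_lt hvd)]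

end FlatPiece

theorem stmt7_general (a b w c₀ d₀ : ℝ) (ha : 0 < a) (hb : 0 < b) (hw : w ∈ Set.Ioo (0 : ℝ) 1)
    (F : ℝ → ℝ) (hmono : Monotone F)
    (hlen : a + b < d₀ - c₀)
    (hconst : ∀ t ∈ Set.Ioo c₀ d₀, F t = w)
    (hleft : ∀ t < c₀, F t < w) (hright : ∀ t, d₀ < t → w < F t) :
    {x : ℝ | (b * w / (b * w + a * (1 - w))) * ∫ t in x..(x + a), (1 - F t)
        = (1 - b * w / (b * w + a * (1 - w))) * ∫ t in (x - b)..x, F t}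
      = Set.Icc (c₀ + b) (d₀ - a) := by
  have hB : 0 < b * w := mul_pos hb hw.1
  have hA : 0 < a * (1 - w) := mul_pos ha (sub_pos.2 hw.2)
  have hcd : c₀ < d₀ := by linarith
  ext x
  rw [mem_ofPred_eq, div_add_mul_eq_one_sub_div_add_mul_iff (add_pos hB hA).ne']
  constructor
  · intro hx
    refine ⟨not_lt.1 fun hxc => ?_, not_lt.1 fun hxd => ?_⟩
    · have hF := integral_lt_mul_of_lt_left_end hmono hconst hcd hleft
        (by linarith : x - b < x) (by linarith) (by linarith)
      have hG := mul_le_integral_one_sub_of_lt_right_end hmono hconst hcd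
        (by linarith : x ≤ x + a) (by linarith)
      rw [sub_sub_cancel] at hF
      rw [add_sub_cancel_left] at hG
      nlinarith
    · have hF := mul_le_integral_of_left_end_lt hmono hconst hcd
        (by linarith : x - b ≤ x) (by linarith)
      have hG := integral_one_sub_lt_mul_of_right_end_lt hmono hconst hcd hright
        (by linarith : x < x + a) (by linarith) (by linarith)
      rw [sub_sub_cancel] at hF
      rw [add_sub_cancel_left] at hG
      nlinarith
  · rintro ⟨hxc, hxd⟩
    have hflat : ∀ t ∈ Ioo (x - b) (x + a), F t = w := fun t ht =>
      hconst t ⟨by linarith [ht.1], by linarith [ht.2]⟩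
    rw [integral_eq_mul_of_forall_Ioo_eq (M := 1 - w) (by linarith) fun t ht => by
        rw [hflat t ⟨by linarith [ht.1], ht.2⟩],
      integral_eq_mul_of_forall_Ioo_eq (by linarith) fun t ht => hflat t ⟨ht.1, by linarith [ht.2]⟩]
    ring

/-- If a CDF `F` is constant equal to `w ∈ (0,1)` on a maximal interval `(c₀,d₀)` with
`d₀ − c₀ > a + b`, then for `α = bw/(bw + a(1−w))` the Huber functional `H^α_{a,b}(F)`
equals `[c₀ + b, d₀ − a]`. -/
theorem stmt7 (a b w c₀ d₀ : ℝ) (ha : 0 < a) (hb : 0 < b) (hw : w ∈ Set.Ioo (0 : ℝ) 1)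
    (F : ℝ → ℝ) (hmono : Monotone F) (h0 : ∀ t, 0 ≤ F t) (h1 : ∀ t, F t ≤ 1)
    (hrc : ∀ x, ContinuousWithinAt F (Set.Ici x) x)
    (hbot : Tendsto F atBot (nhds 0)) (htop : Tendsto F atTop (nhds 1))
    (hlen : a + b < d₀ - c₀)
    (hconst : ∀ t ∈ Set.Ioo c₀ d₀, F t = w)
    (hleft : ∀ t < c₀, F t < w) (hright : ∀ t, d₀ < t → w < F t) :
    {x : ℝ | (b * w / (b * w + a * (1 - w))) * ∫ t in x..(x + a), (1 - F t)
        = (1 - b * w / (b * w + a * (1 - w))) * ∫ t in (x - b)..x, F t}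
      = Set.Icc (c₀ + b) (d₀ - a) :=
  stmt7_general a b w c₀ d₀ ha hb hw F hmono hlen hconst hleft hright
end

section
/- For a CDF F on ℝ and α ∈ (0,1), let q₀ = min Q^α(F) be the smallest α-quantile. Then for every a > 0, q₀ − a < min H^α_{a,a}(F) ≤ q₀ + a; consequently lim_{a↓0} min H^α_{a,a}(F) = q₀. -/
/-!
Below the smallest quantile `q₀` the CDF stays under `α` (a point `t < q₀` with `F t = α` would
itself be a quantile), while from `q₀` on it is at least `α`. Since
`G_a(u) = (1 - α) ∫_{u-a}^u F + α ∫_u^{u+a} F - α a`, this gives `G_a(q₀ - a) < 0 ≤ G_a(q₀ + a)`.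
As `G_a` is continuous and nondecreasing, its smallest zero lies in `(q₀ - a, q₀ + a]`.
-/

open Set MeasureTheory Filter Topology intervalIntegral

section IntervalIntegral

variable {f : ℝ → ℝ}

theorem continuous_intervalIntegral_of_continuous (hf : ∀ b c, IntervalIntegrable f volume b c)
    {l r : ℝ → ℝ} (hl : Continuous l) (hr : Continuous r) :
    Continuous fun u => ∫ t in l u..r u, f t := by
  have hprim := continuous_primitive hf 0
  exact ((hprim.comp hr).sub (hprim.comp hl)).congr fun u =>
    integral_interval_sub_left (hf 0 _) (hf 0 _)

theorem Monotone.monotone_intervalIntegral_add (hf : Monotone f) {b c : ℝ} (hbc : b ≤ c) :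
    Monotone fun u => ∫ t in (u + b)..(u + c), f t := by
  intro u v huv
  simp only [← integral_comp_add_left]
  have hshift : ∀ w, Monotone fun t => f (w + t) := fun w s t hst => hf (by linarith)
  exact integral_mono_on hbc (hshift u).intervalIntegrable (hshift v).intervalIntegrable
    fun t _ => hf (by linarith)

theorem Monotone.mul_le_intervalIntegral (hf : Monotone f) {b c : ℝ} (hbc : b ≤ c) :
    (c - b) * f b ≤ ∫ t in b..c, f t := by
  simpa [mul_comm] using
    integral_mono_on hbc intervalIntegrable_const (hf.intervalIntegrable (μ := volume))
      fun t ht => hf ht.1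

theorem Monotone.intervalIntegral_le_mul_leftLim (hf : Monotone f) {b c : ℝ} (hbc : b ≤ c) :
    ∫ t in b..c, f t ≤ (c - b) * Function.leftLim f c := by
  simpa [mul_comm] using integral_mono_on_of_le_Ioo hbc (hf.intervalIntegrable (μ := volume))
    intervalIntegrable_const fun t ht => hf.le_leftLim ht.2

end IntervalIntegral

theorem Monotone.csInf_setOf_eq_mem_Ioc {G : ℝ → ℝ} (hG : Monotone G) (hGc : Continuous G)
    {b c y : ℝ} (hb : G b < y) (hc : y ≤ G c) : sInf {x | G x = y} ∈ Ioc b c := by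
  have hbc : b < c := hG.reflect_lt (hb.trans_le hc)
  obtain ⟨z, hz, hGz⟩ := intermediate_value_Icc hbc.le hGc.continuousOn ⟨hb.le, hc⟩
  have hlower : ∀ x ∈ {x | G x = y}, b < x := fun x hx => hG.reflect_lt (hb.trans_eq hx.symm)
  have hbdd : BddBelow {x | G x = y} := ⟨b, fun x hx => (hlower x hx).le⟩
  have hmem := (isClosed_eq hGc continuous_const).csInf_mem ⟨z, hGz⟩ hbdd
  exact ⟨hlower _ hmem, (csInf_le hbdd hGz).trans hz.2⟩

theorem Monotone.lt_of_lt_least_quantile {F : ℝ → ℝ} (hF : Monotone F) {α q t : ℝ}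
    (hq : Function.leftLim F q ≤ α)
    (hmin : ∀ x, Function.leftLim F x ≤ α → α ≤ F x → q ≤ x) (ht : t < q) : F t < α := by
  by_contra! hαt
  have hFt : F t ≤ α := (hF.le_leftLim ht).trans hq
  exact ht.not_ge (hmin t ((hF.leftLim_le le_rfl).trans hFt) hαt)

/-- The paper's `G_a`, whose zero set is `H^α_{a,a}(F)`. -/
noncomputable def quantileBalance (α a : ℝ) (F : ℝ → ℝ) (u : ℝ) : ℝ :=
  (1 - α) * (∫ t in (u - a)..u, F t) - α * ∫ t in u..(u + a), (1 - F t)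

section QuantileBalance

variable {α a : ℝ} {F : ℝ → ℝ}

theorem setOf_eq_eq_quantileBalance_zero :
    {x : ℝ | α * ∫ t in x..(x + a), (1 - F t) = (1 - α) * ∫ t in (x - a)..x, F t}
      = {x | quantileBalance α a F x = 0} := by
  ext x
  exact eq_comm.trans sub_eq_zero.symm

theorem Monotone.quantileBalance_eq (hF : Monotone F) (u : ℝ) :
    quantileBalance α a F u
      = (1 - α) * (∫ t in (u - a)..u, F t) + α * (∫ t in u..(u + a), F t) - α * a := by
  rw [quantileBalance, integral_sub intervalIntegrable_const hF.intervalIntegrable]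
  simp only [intervalIntegral.integral_const, smul_eq_mul, add_sub_cancel_left]
  ring

theorem Monotone.continuous_quantileBalance (hF : Monotone F) :
    Continuous (quantileBalance α a F) := by
  have hwindow : ∀ {l r : ℝ → ℝ}, Continuous l → Continuous r →
      Continuous fun u => ∫ t in l u..r u, F t :=
    continuous_intervalIntegral_of_continuous fun _ _ => hF.intervalIntegrable
  rw [funext hF.quantileBalance_eq]
  exact ((continuous_const.mul (hwindow (by fun_prop) continuous_id)).add
    (continuous_const.mul (hwindow continuous_id (by fun_prop)))).sub continuous_const

theorem Monotone.monotone_quantileBalance (hF : Monotone F) (hα : α ∈ Icc (0 : ℝ) 1)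
    (ha : 0 ≤ a) : Monotone (quantileBalance α a F) := by
  have hW₁ : Monotone fun u => ∫ t in (u - a)..u, F t := by
    simpa [← sub_eq_add_neg] using hF.monotone_intervalIntegral_add (neg_nonpos.2 ha)
  have hW₂ : Monotone fun u => ∫ t in u..(u + a), F t := by
    simpa using hF.monotone_intervalIntegral_add ha
  intro u v huv
  rw [hF.quantileBalance_eq, hF.quantileBalance_eq]
  have h₁ := mul_le_mul_of_nonneg_left (hW₁ huv) (sub_nonneg.2 hα.2)
  have h₂ := mul_le_mul_of_nonneg_left (hW₂ huv) hα.1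
  simp only at h₁ h₂
  linarith

theorem Monotone.quantileBalance_sub_neg (hF : Monotone F) (hα : α ∈ Ioo (0 : ℝ) 1) (ha : 0 < a)
    {q : ℝ} (hlt : F (q - a) < α) (hq : Function.leftLim F q ≤ α) :
    quantileBalance α a F (q - a) < 0 := by
  obtain ⟨hα₀, hα₁⟩ := hα
  have h₁ : ∫ t in (q - a - a)..(q - a), F t ≤ a * F (q - a) := by
    have := hF.intervalIntegral_le_mul_leftLim (b := q - a - a) (c := q - a) (by linarith)
    nlinarith [hF.leftLim_le (le_refl (q - a))]
  have h₂ : ∫ t in (q - a)..(q - a + a), F t ≤ a * α := by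
    have := hF.intervalIntegral_le_mul_leftLim (b := q - a) (c := q) (by linarith)
    rw [sub_add_cancel]
    nlinarith
  rw [hF.quantileBalance_eq]
  nlinarith [mul_le_mul_of_nonneg_left h₁ (sub_nonneg.2 hα₁.le),
    mul_le_mul_of_nonneg_left h₂ hα₀.le, mul_lt_mul_of_pos_left hlt (mul_pos (sub_pos.2 hα₁) ha)]

theorem Monotone.quantileBalance_add_nonneg (hF : Monotone F) (hα : α ∈ Icc (0 : ℝ) 1)
    (ha : 0 ≤ a) {q : ℝ} (hq : α ≤ F q) : 0 ≤ quantileBalance α a F (q + a) := by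
  obtain ⟨hα₀, hα₁⟩ := hα
  have h₁ : a * α ≤ ∫ t in (q + a - a)..(q + a), F t := by
    have := hF.mul_le_intervalIntegral (b := q) (c := q + a) (by linarith)
    rw [add_sub_cancel_right]
    nlinarith
  have h₂ : a * α ≤ ∫ t in (q + a)..(q + a + a), F t := by
    have := hF.mul_le_intervalIntegral (b := q + a) (c := q + a + a) (by linarith)
    nlinarith [hF (le_add_of_nonneg_right ha : q ≤ q + a)]
  rw [hF.quantileBalance_eq]
  nlinarith [mul_le_mul_of_nonneg_left h₁ (sub_nonneg.2 hα₁), mul_le_mul_of_nonneg_left h₂ hα₀]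

end QuantileBalance

theorem stmt8_general (α q₀ : ℝ) (hα : α ∈ Set.Ioo (0 : ℝ) 1)
    (F : ℝ → ℝ) (hmono : Monotone F)
    (hq : Function.leftLim F q₀ ≤ α ∧ α ≤ F q₀)
    (hqmin : ∀ x, Function.leftLim F x ≤ α → α ≤ F x → q₀ ≤ x) :
    (∀ a : ℝ, 0 < a →
      q₀ - a < sInf {x : ℝ | α * ∫ t in x..(x + a), (1 - F t)
          = (1 - α) * ∫ t in (x - a)..x, F t} ∧
      sInf {x : ℝ | α * ∫ t in x..(x + a), (1 - F t)
          = (1 - α) * ∫ t in (x - a)..x, F t} ≤ q₀ + a) ∧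
    Tendsto (fun a : ℝ => sInf {x : ℝ | α * ∫ t in x..(x + a), (1 - F t)
        = (1 - α) * ∫ t in (x - a)..x, F t}) (nhdsWithin 0 (Set.Ioi 0)) (nhds q₀) := by
  have bounds : ∀ a : ℝ, 0 < a →
      sInf {x : ℝ | α * ∫ t in x..(x + a), (1 - F t) = (1 - α) * ∫ t in (x - a)..x, F t}
        ∈ Ioc (q₀ - a) (q₀ + a) := by
    intro a ha
    rw [setOf_eq_eq_quantileBalance_zero]
    have hlt := hmono.lt_of_lt_least_quantile hq.1 hqmin (sub_lt_self q₀ ha)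
    exact (hmono.monotone_quantileBalance (Ioo_subset_Icc_self hα) ha.le).csInf_setOf_eq_mem_Ioc
      hmono.continuous_quantileBalance (hmono.quantileBalance_sub_neg hα ha hlt hq.1)
      (hmono.quantileBalance_add_nonneg (Ioo_subset_Icc_self hα) ha.le hq.2)
  refine ⟨bounds, tendsto_of_tendsto_of_tendsto_of_le_of_le'
    (g := fun a => q₀ - a) (h := fun a => q₀ + a) ?_ ?_ ?_ ?_⟩
  · exact tendsto_nhdsWithin_of_tendsto_nhds (by simpa using (tendsto_id (x := 𝓝 (0 : ℝ))).const_sub q₀)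
  · exact tendsto_nhdsWithin_of_tendsto_nhds (by simpa using (tendsto_id (x := 𝓝 (0 : ℝ))).const_add q₀)
  · filter_upwards [self_mem_nhdsWithin] with a ha using (bounds a ha).1.le
  · filter_upwards [self_mem_nhdsWithin] with a ha using (bounds a ha).2

/-- If `q₀` is the smallest `α`-quantile of a CDF `F`, then for every `a > 0`,
`q₀ − a < min H^α_{a,a}(F) ≤ q₀ + a`, and hence `min H^α_{a,a}(F) → q₀` as `a ↓ 0`. -/
theorem stmt8 (α q₀ : ℝ) (hα : α ∈ Set.Ioo (0 : ℝ) 1)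
    (F : ℝ → ℝ) (hmono : Monotone F) (h0 : ∀ t, 0 ≤ F t) (h1 : ∀ t, F t ≤ 1)
    (hrc : ∀ x, ContinuousWithinAt F (Set.Ici x) x)
    (hbot : Tendsto F atBot (nhds 0)) (htop : Tendsto F atTop (nhds 1))
    (hq : Function.leftLim F q₀ ≤ α ∧ α ≤ F q₀)
    (hqmin : ∀ x, Function.leftLim F x ≤ α → α ≤ F x → q₀ ≤ x) :
    (∀ a : ℝ, 0 < a →
      q₀ - a < sInf {x : ℝ | α * ∫ t in x..(x + a), (1 - F t)
          = (1 - α) * ∫ t in (x - a)..x, F t} ∧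
      sInf {x : ℝ | α * ∫ t in x..(x + a), (1 - F t)
          = (1 - α) * ∫ t in (x - a)..x, F t} ≤ q₀ + a) ∧
    Tendsto (fun a : ℝ => sInf {x : ℝ | α * ∫ t in x..(x + a), (1 - F t)
        = (1 - α) * ∫ t in (x - a)..x, F t}) (nhdsWithin 0 (Set.Ioi 0)) (nhds q₀) :=
  stmt8_general α q₀ hα F hmono hq hqmin
end

section
/- Let F have finite first moment. Then min H^α_{a,a}(F) and max H^α_{a,a}(F) both converge, as a → ∞, to the unique α-expectile of F, i.e. the unique x with α·E_F[(Y−x)₊] = (1−α)·E_F[(x−Y)₊]. -/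
open Set MeasureTheory Filter Topology

section aux

variable {μ : MeasureTheory.Measure ℝ} [IsProbabilityMeasure μ]

/-- Integrability of the truncated positive part `min ((y-x)₊) a`. -/
lemma integrable_trunc_pos (hint : Integrable (fun y : ℝ => y) μ) (x a : ℝ) :
    Integrable (fun y : ℝ => min (max (y - x) 0) a) μ := by
  have hm : AEStronglyMeasurable (fun y : ℝ => min (max (y - x) 0) a) μ :=
    (((continuous_id.sub continuous_const).max continuous_const).min
      continuous_const).aestronglyMeasurable
  refine Integrable.mono (g := fun y : ℝ => |y| + (|x| + |a|))
    (hint.abs.add (integrable_const _)) hm ?_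
  filter_upwards with y
  have h0 : (0:ℝ) ≤ |y| + (|x| + |a|) := by positivity
  rw [Real.norm_eq_abs, Real.norm_eq_abs, abs_of_nonneg h0]
  have h1 : max (y - x) 0 ≤ |y| + |x| := by
    refine max_le ?_ (by positivity)
    calc y - x ≤ |y - x| := le_abs_self _
    _ ≤ |y| + |x| := abs_sub _ _
  have h2 : -(|y| + (|x| + |a|)) ≤ min (max (y - x) 0) a := by
    refine le_min ?_ ?_
    · have : (0:ℝ) ≤ max (y - x) 0 := le_max_right _ _
      linarith
    · have : -|a| ≤ a := neg_abs_le a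
      have := abs_nonneg y
      have := abs_nonneg x
      linarith
  have h3 : min (max (y - x) 0) a ≤ |y| + (|x| + |a|) := by
    have := min_le_left (max (y - x) 0) a
    have := abs_nonneg a
    linarith
  exact abs_le.2 ⟨h2, h3⟩

lemma integrable_trunc_neg (hint : Integrable (fun y : ℝ => y) μ) (x a : ℝ) :
    Integrable (fun y : ℝ => min (max (x - y) 0) a) μ := by
  have hm : AEStronglyMeasurable (fun y : ℝ => min (max (x - y) 0) a) μ :=
    (((continuous_const.sub continuous_id).max continuous_const).min
      continuous_const).aestronglyMeasurable
  refine Integrable.mono (g := fun y : ℝ => |y| + (|x| + |a|))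
    (hint.abs.add (integrable_const _)) hm ?_
  filter_upwards with y
  have h0 : (0:ℝ) ≤ |y| + (|x| + |a|) := by positivity
  rw [Real.norm_eq_abs, Real.norm_eq_abs, abs_of_nonneg h0]
  have h1 : max (x - y) 0 ≤ |y| + |x| := by
    refine max_le ?_ (by positivity)
    calc x - y ≤ |x - y| := le_abs_self _
    _ ≤ |x| + |y| := abs_sub _ _
    _ = |y| + |x| := by ring
  have h2 : -(|y| + (|x| + |a|)) ≤ min (max (x - y) 0) a := by
    refine le_min ?_ ?_
    · have : (0:ℝ) ≤ max (x - y) 0 := le_max_right _ _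
      linarith
    · have : -|a| ≤ a := neg_abs_le a
      have := abs_nonneg y
      have := abs_nonneg x
      linarith
  have h3 : min (max (x - y) 0) a ≤ |y| + (|x| + |a|) := by
    have := min_le_left (max (x - y) 0) a
    have := abs_nonneg a
    linarith
  exact abs_le.2 ⟨h2, h3⟩

lemma integrable_pos_part (hint : Integrable (fun y : ℝ => y) μ) (x : ℝ) :
    Integrable (fun y : ℝ => max (y - x) 0) μ := by
  have hm : AEStronglyMeasurable (fun y : ℝ => max (y - x) 0) μ :=
    ((continuous_id.sub continuous_const).max continuous_const).aestronglyMeasurable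
  refine Integrable.mono (g := fun y : ℝ => |y| + |x|)
    (hint.abs.add (integrable_const _)) hm ?_
  filter_upwards with y
  have h0 : (0:ℝ) ≤ |y| + |x| := by positivity
  rw [Real.norm_eq_abs, Real.norm_eq_abs, abs_of_nonneg h0,
    abs_of_nonneg (le_max_right _ _)]
  refine max_le ?_ h0
  calc y - x ≤ |y - x| := le_abs_self _
  _ ≤ |y| + |x| := abs_sub _ _

lemma integrable_neg_part (hint : Integrable (fun y : ℝ => y) μ) (x : ℝ) :
    Integrable (fun y : ℝ => max (x - y) 0) μ := by
  have hm : AEStronglyMeasurable (fun y : ℝ => max (x - y) 0) μ :=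
    ((continuous_const.sub continuous_id).max continuous_const).aestronglyMeasurable
  refine Integrable.mono (g := fun y : ℝ => |y| + |x|)
    (hint.abs.add (integrable_const _)) hm ?_
  filter_upwards with y
  have h0 : (0:ℝ) ≤ |y| + |x| := by positivity
  rw [Real.norm_eq_abs, Real.norm_eq_abs, abs_of_nonneg h0,
    abs_of_nonneg (le_max_right _ _)]
  refine max_le ?_ h0
  calc x - y ≤ |x - y| := le_abs_self _
  _ ≤ |x| + |y| := abs_sub _ _
  _ = |y| + |x| := by ring

/-- A uniform pointwise bound on the difference gives a bound on the difference
of integrals (for a probability measure). -/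
lemma integral_diff_le {f g : ℝ → ℝ} (hf : Integrable f μ) (hg : Integrable g μ)
    {b : ℝ} (hb : ∀ y, |f y - g y| ≤ b) :
    |(∫ y, f y ∂μ) - ∫ y, g y ∂μ| ≤ b := by
  rw [← integral_sub hf hg]
  calc |∫ y, (f y - g y) ∂μ| ≤ ∫ y, |f y - g y| ∂μ := by
        simpa [Real.norm_eq_abs] using norm_integral_le_integral_norm (fun y => f y - g y) (μ := μ)
  _ ≤ ∫ _, b ∂μ := integral_mono ((hf.sub hg).abs) (integrable_const _) hb
  _ = b := by simp

end aux

/-- If `F` has finite first moment, then `min H^α_{a,a}(F)` and `max H^α_{a,a}(F)` both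
converge, as `a → ∞`, to the unique `α`-expectile of `F`. -/
theorem stmt9 (α e : ℝ) (hα : α ∈ Set.Ioo (0 : ℝ) 1)
    (μ : Measure ℝ) [IsProbabilityMeasure μ] (hint : Integrable (fun y : ℝ => y) μ)
    (he : α * ∫ y, max (y - e) 0 ∂μ = (1 - α) * ∫ y, max (e - y) 0 ∂μ)
    (huniq : ∀ x : ℝ,
      α * ∫ y, max (y - x) 0 ∂μ = (1 - α) * ∫ y, max (x - y) 0 ∂μ → x = e) :
    Tendsto (fun a : ℝ => sInf {x : ℝ | α * ∫ y, min (max (y - x) 0) a ∂μ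
        = (1 - α) * ∫ y, min (max (x - y) 0) a ∂μ}) atTop (nhds e) ∧
    Tendsto (fun a : ℝ => sSup {x : ℝ | α * ∫ y, min (max (y - x) 0) a ∂μ
        = (1 - α) * ∫ y, min (max (x - y) 0) a ∂μ}) atTop (nhds e) := by
  obtain ⟨hα0, hα1⟩ := hα
  have h1α : 0 < 1 - α := by linarith
  -- notation
  set g : ℝ → ℝ → ℝ := fun a x =>
    α * ∫ y, min (max (y - x) 0) a ∂μ - (1 - α) * ∫ y, min (max (x - y) 0) a ∂μ with hg
  set G : ℝ → ℝ := fun x =>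
    α * ∫ y, max (y - x) 0 ∂μ - (1 - α) * ∫ y, max (x - y) 0 ∂μ with hG
  set S : ℝ → Set ℝ := fun a => {x : ℝ | α * ∫ y, min (max (y - x) 0) a ∂μ
        = (1 - α) * ∫ y, min (max (x - y) 0) a ∂μ} with hS
  have hSg : ∀ a x, x ∈ S a ↔ g a x = 0 := by
    intro a x
    simp only [hS, hg, Set.mem_setOf_eq, sub_eq_zero]
  set c : ℝ := min α (1 - α) with hc
  have hc0 : 0 < c := lt_min hα0 h1α
  -- strict decrease of G
  have hGdec : ∀ x x' : ℝ, x ≤ x' → G x - G x' ≥ c * (x' - x) := by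
    intro x x' hxx
    have hi1 := integrable_pos_part hint (μ := μ) x
    have hi2 := integrable_pos_part hint (μ := μ) x'
    have hi3 := integrable_neg_part hint (μ := μ) x
    have hi4 := integrable_neg_part hint (μ := μ) x'
    have j1 : Integrable (fun y : ℝ => α * (max (y - x) 0 - max (y - x') 0)) μ := by
      exact (hi1.sub hi2).const_mul α
    have j2 : Integrable (fun y : ℝ => (1 - α) * (max (x' - y) 0 - max (x - y) 0)) μ := by
      exact (hi4.sub hi3).const_mul (1 - α)
    have key : G x - G x' = ∫ y, (α * (max (y - x) 0 - max (y - x') 0)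
        + (1 - α) * (max (x' - y) 0 - max (x - y) 0)) ∂μ := by
      rw [integral_add j1 j2, integral_const_mul, integral_const_mul,
        integral_sub hi1 hi2, integral_sub hi4 hi3]
      simp only [hG]
      ring
    rw [key]
    have : (c * (x' - x)) = ∫ _, c * (x' - x) ∂μ := by simp
    rw [ge_iff_le, this]
    refine integral_mono (integrable_const _) (j1.add j2) ?_
    intro y
    dsimp only
    have hA : 0 ≤ max (y - x) 0 - max (y - x') 0 :=
      sub_nonneg.2 (max_le_max (by linarith) le_rfl)
    have hB : 0 ≤ max (x' - y) 0 - max (x - y) 0 :=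
      sub_nonneg.2 (max_le_max (by linarith) le_rfl)
    have hAB : (max (y - x) 0 - max (y - x') 0) + (max (x' - y) 0 - max (x - y) 0)
        = x' - x := by
      have e1 : max (y - x) 0 - max (x - y) 0 = y - x := by
        rcases le_total y x with h | h
        · rw [max_eq_right (by linarith), max_eq_left (by linarith)]; ring
        · rw [max_eq_left (by linarith), max_eq_right (by linarith)]; ring
      have e2 : max (y - x') 0 - max (x' - y) 0 = y - x' := by
        rcases le_total y x' with h | h
        · rw [max_eq_right (by linarith), max_eq_left (by linarith)]; ring
        · rw [max_eq_left (by linarith), max_eq_right (by linarith)]; ring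
      linarith
    have hc1 : c ≤ α := min_le_left _ _
    have hc2 : c ≤ 1 - α := min_le_right _ _
    rw [← hAB, mul_add]
    have t1 := mul_le_mul_of_nonneg_right hc1 hA
    have t2 := mul_le_mul_of_nonneg_right hc2 hB
    linarith
  have hGe : G e = 0 := by rw [hG]; dsimp only; linarith [he]
  -- truncation error
  set E : ℝ → ℝ := fun a => ∫ y, max (|y| + (|e| + 1) - a) 0 ∂μ with hE
  have hEtend : Tendsto E atTop (nhds 0) := by
    have h0 : ∫ (_ : ℝ), (0:ℝ) ∂μ = (0:ℝ) := by simp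
    rw [← h0]
    refine tendsto_integral_filter_of_dominated_convergence (fun y => |y| + (|e| + 1)) ?_ ?_ ?_ ?_
    · filter_upwards with a
      exact (((continuous_abs.add continuous_const).sub continuous_const).max
        continuous_const).aestronglyMeasurable
    · filter_upwards [eventually_ge_atTop (0:ℝ)] with a ha
      filter_upwards with y
      rw [Real.norm_eq_abs, abs_of_nonneg (le_max_right _ _)]
      refine max_le (by linarith) (by positivity)
    · exact hint.abs.add (integrable_const _)
    · filter_upwards with y
      refine Tendsto.congr' ?_ tendsto_const_nhds
      filter_upwards [eventually_ge_atTop (|y| + (|e| + 1))] with a ha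
      exact (max_eq_right (by linarith)).symm
  have hbint : Integrable (fun y : ℝ => |y| + (|e| + 1)) μ := by
    exact hint.abs.add (integrable_const _)
  -- ≤-bound between g and G
  have hgG : ∀ x : ℝ, |x| ≤ |e| + 1 → ∀ a : ℝ, 0 ≤ a → |g a x - G x| ≤ E a := by
    intro x hx a ha
    have hEnn : 0 ≤ E a :=
      integral_nonneg fun y => le_max_right _ _
    have hP : |(∫ y, min (max (y - x) 0) a ∂μ) - ∫ y, max (y - x) 0 ∂μ| ≤ E a := by
      have h1 : ∀ y : ℝ, |min (max (y - x) 0) a - max (y - x) 0|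
          ≤ max (|y| + (|e| + 1) - a) 0 := by
        intro y
        have hm : max (y - x) 0 ≤ |y| + (|e| + 1) := by
          refine max_le ?_ (by positivity)
          calc y - x ≤ |y - x| := le_abs_self _
          _ ≤ |y| + |x| := abs_sub _ _
          _ ≤ |y| + (|e| + 1) := by linarith
        rcases le_total (max (y - x) 0) a with h | h
        · rw [min_eq_left h]; simp [le_max_right]
        · rw [min_eq_right h, abs_of_nonpos (by linarith)]
          refine le_max_of_le_left ?_
          linarith
      calc |(∫ y, min (max (y - x) 0) a ∂μ) - ∫ y, max (y - x) 0 ∂μ|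
          ≤ ∫ y, |min (max (y - x) 0) a - max (y - x) 0| ∂μ := by
            rw [← integral_sub (integrable_trunc_pos hint x a) (integrable_pos_part hint x)]
            simpa [Real.norm_eq_abs] using
              norm_integral_le_integral_norm
                (fun y => min (max (y - x) 0) a - max (y - x) 0) (μ := μ)
      _ ≤ E a := integral_mono
            (((integrable_trunc_pos hint x a).sub (integrable_pos_part hint x)).abs)
            (by
              refine hbint.mono
                ((((continuous_abs.add continuous_const).sub continuous_const).max
                  continuous_const).aestronglyMeasurable) ?_
              filter_upwards with y
              rw [Real.norm_eq_abs, Real.norm_eq_abs, abs_of_nonneg (le_max_right _ _),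
                abs_of_nonneg (by positivity : (0:ℝ) ≤ |y| + (|e| + 1))]
              exact max_le (by linarith [abs_nonneg y]) (by positivity)) h1
    have hN : |(∫ y, min (max (x - y) 0) a ∂μ) - ∫ y, max (x - y) 0 ∂μ| ≤ E a := by
      have h1 : ∀ y : ℝ, |min (max (x - y) 0) a - max (x - y) 0|
          ≤ max (|y| + (|e| + 1) - a) 0 := by
        intro y
        have hm : max (x - y) 0 ≤ |y| + (|e| + 1) := by
          refine max_le ?_ (by positivity)
          calc x - y ≤ |x - y| := le_abs_self _
          _ ≤ |x| + |y| := abs_sub _ _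
          _ ≤ |y| + (|e| + 1) := by linarith
        rcases le_total (max (x - y) 0) a with h | h
        · rw [min_eq_left h]; simp [le_max_right]
        · rw [min_eq_right h, abs_of_nonpos (by linarith)]
          refine le_max_of_le_left ?_
          linarith
      calc |(∫ y, min (max (x - y) 0) a ∂μ) - ∫ y, max (x - y) 0 ∂μ|
          ≤ ∫ y, |min (max (x - y) 0) a - max (x - y) 0| ∂μ := by
            rw [← integral_sub (integrable_trunc_neg hint x a) (integrable_neg_part hint x)]
            simpa [Real.norm_eq_abs] using
              norm_integral_le_integral_norm
                (fun y => min (max (x - y) 0) a - max (x - y) 0) (μ := μ)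
      _ ≤ E a := integral_mono
            (((integrable_trunc_neg hint x a).sub (integrable_neg_part hint x)).abs)
            (by
              refine hbint.mono
                ((((continuous_abs.add continuous_const).sub continuous_const).max
                  continuous_const).aestronglyMeasurable) ?_
              filter_upwards with y
              rw [Real.norm_eq_abs, Real.norm_eq_abs, abs_of_nonneg (le_max_right _ _),
                abs_of_nonneg (by positivity : (0:ℝ) ≤ |y| + (|e| + 1))]
              exact max_le (by linarith [abs_nonneg y]) (by positivity)) h1
    have expand : g a x - G x
        = α * ((∫ y, min (max (y - x) 0) a ∂μ) - ∫ y, max (y - x) 0 ∂μ)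
          - (1 - α) * ((∫ y, min (max (x - y) 0) a ∂μ) - ∫ y, max (x - y) 0 ∂μ) := by
      simp only [hg, hG]; ring
    rw [expand]
    calc |α * ((∫ y, min (max (y - x) 0) a ∂μ) - ∫ y, max (y - x) 0 ∂μ)
          - (1 - α) * ((∫ y, min (max (x - y) 0) a ∂μ) - ∫ y, max (x - y) 0 ∂μ)|
        ≤ |α * ((∫ y, min (max (y - x) 0) a ∂μ) - ∫ y, max (y - x) 0 ∂μ)|
          + |(1 - α) * ((∫ y, min (max (x - y) 0) a ∂μ) - ∫ y, max (x - y) 0 ∂μ)| :=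
          abs_sub _ _
    _ ≤ α * E a + (1 - α) * E a := by
        rw [abs_mul, abs_mul, abs_of_pos hα0, abs_of_pos h1α]
        have := mul_le_mul_of_nonneg_left hP (le_of_lt hα0)
        have := mul_le_mul_of_nonneg_left hN (le_of_lt h1α)
        linarith
    _ = E a := by ring
  -- monotonicity of g in x
  have hgmono : ∀ a x x' : ℝ, x ≤ x' → g a x' ≤ g a x := by
    intro a x x' hxx
    have hP : (∫ y, min (max (y - x') 0) a ∂μ) ≤ ∫ y, min (max (y - x) 0) a ∂μ := by
      refine integral_mono (integrable_trunc_pos hint x' a) (integrable_trunc_pos hint x a) ?_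
      intro y
      exact min_le_min (max_le_max (by linarith) le_rfl) le_rfl
    have hN : (∫ y, min (max (x - y) 0) a ∂μ) ≤ ∫ y, min (max (x' - y) 0) a ∂μ := by
      refine integral_mono (integrable_trunc_neg hint x a) (integrable_trunc_neg hint x' a) ?_
      intro y
      exact min_le_min (max_le_max (by linarith) le_rfl) le_rfl
    simp only [hg]
    nlinarith
  -- Lipschitz continuity of g a
  have hglip : ∀ a : ℝ, ∀ x x' : ℝ, |g a x - g a x'| ≤ |x - x'| := by
    intro a x x'
    have hP : |(∫ y, min (max (y - x) 0) a ∂μ) - ∫ y, min (max (y - x') 0) a ∂μ|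
        ≤ |x - x'| := by
      refine integral_diff_le (integrable_trunc_pos hint x a)
        (integrable_trunc_pos hint x' a) ?_
      intro y
      calc |min (max (y - x) 0) a - min (max (y - x') 0) a|
          ≤ max |max (y - x) 0 - max (y - x') 0| |a - a| := abs_min_sub_min_le_max _ _ _ _
      _ ≤ max (max |(y - x) - (y - x')| |(0:ℝ) - 0|) |a - a| := by
          refine max_le_max (abs_max_sub_max_le_max _ _ _ _) le_rfl
      _ ≤ |x - x'| := by
          simp only [sub_self, abs_zero]
          rw [show (y - x) - (y - x') = x' - x by ring, abs_sub_comm x' x]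
          simp [abs_nonneg]
    have hN : |(∫ y, min (max (x - y) 0) a ∂μ) - ∫ y, min (max (x' - y) 0) a ∂μ|
        ≤ |x - x'| := by
      refine integral_diff_le (integrable_trunc_neg hint x a)
        (integrable_trunc_neg hint x' a) ?_
      intro y
      calc |min (max (x - y) 0) a - min (max (x' - y) 0) a|
          ≤ max |max (x - y) 0 - max (x' - y) 0| |a - a| := abs_min_sub_min_le_max _ _ _ _
      _ ≤ max (max |(x - y) - (x' - y)| |(0:ℝ) - 0|) |a - a| := by
          refine max_le_max (abs_max_sub_max_le_max _ _ _ _) le_rfl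
      _ ≤ |x - x'| := by
          simp only [sub_self, abs_zero]
          rw [show (x - y) - (x' - y) = x - x' by ring]
          simp [abs_nonneg]
    have expand : g a x - g a x'
        = α * ((∫ y, min (max (y - x) 0) a ∂μ) - ∫ y, min (max (y - x') 0) a ∂μ)
          - (1 - α) * ((∫ y, min (max (x - y) 0) a ∂μ) - ∫ y, min (max (x' - y) 0) a ∂μ) := by
      simp only [hg]; ring
    rw [expand]
    calc _ ≤ |α * ((∫ y, min (max (y - x) 0) a ∂μ) - ∫ y, min (max (y - x') 0) a ∂μ)|
          + |(1 - α) * ((∫ y, min (max (x - y) 0) a ∂μ) - ∫ y, min (max (x' - y) 0) a ∂μ)| :=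
          abs_sub _ _
    _ ≤ α * |x - x'| + (1 - α) * |x - x'| := by
        rw [abs_mul, abs_mul, abs_of_pos hα0, abs_of_pos h1α]
        have := mul_le_mul_of_nonneg_left hP (le_of_lt hα0)
        have := mul_le_mul_of_nonneg_left hN (le_of_lt h1α)
        linarith
    _ = |x - x'| := by ring
  have hgcont : ∀ a : ℝ, Continuous (g a) := by
    intro a
    have : LipschitzWith 1 (g a) := by
      refine LipschitzWith.of_dist_le_mul fun x x' => ?_
      rw [Real.dist_eq, Real.dist_eq]
      simpa using hglip a x x'
    exact this.continuous
  -- main localisation step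
  have main : ∀ ε : ℝ, 0 < ε → ε ≤ 1 → ∀ᶠ a in (atTop : Filter ℝ),
      sInf (S a) ∈ Icc (e - ε) (e + ε) ∧ sSup (S a) ∈ Icc (e - ε) (e + ε) := by
    intro ε hε hε1
    have hEev : ∀ᶠ a in (atTop : Filter ℝ), E a < c * ε := by
      have := hEtend
      rw [Metric.tendsto_nhds] at this
      filter_upwards [this (c * ε) (by positivity)] with a ha
      rw [Real.dist_eq, sub_zero] at ha
      calc E a ≤ |E a| := le_abs_self _
      _ < c * ε := ha
    filter_upwards [hEev, eventually_ge_atTop (0:ℝ)] with a hEa ha0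
    have hxm : |e - ε| ≤ |e| + 1 := by
      calc |e - ε| ≤ |e| + |ε| := abs_sub _ _
      _ ≤ |e| + 1 := by rw [abs_of_pos hε]; linarith
    have hxp : |e + ε| ≤ |e| + 1 := by
      calc |e + ε| ≤ |e| + |ε| := abs_add_le _ _
      _ ≤ |e| + 1 := by rw [abs_of_pos hε]; linarith
    have hGl : G (e - ε) ≥ c * ε := by
      have := hGdec (e - ε) e (by linarith)
      rw [hGe] at this
      have h : e - (e - ε) = ε := by ring
      rw [h] at this
      linarith
    have hGr : G (e + ε) ≤ -(c * ε) := by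
      have := hGdec e (e + ε) (by linarith)
      rw [hGe] at this
      have h : e + ε - e = ε := by ring
      rw [h] at this
      linarith
    have hgl : 0 < g a (e - ε) := by
      have := hgG (e - ε) hxm a ha0
      have := abs_le.1 this
      linarith [this.1]
    have hgr : g a (e + ε) < 0 := by
      have := hgG (e + ε) hxp a ha0
      have := abs_le.1 this
      linarith [this.2]
    -- S a is nonempty
    obtain ⟨x₀, hx₀mem, hx₀⟩ : ∃ x₀ ∈ Icc (e - ε) (e + ε), g a x₀ = 0 := by
      have h := intermediate_value_Icc' (by linarith : e - ε ≤ e + ε)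
        ((hgcont a).continuousOn)
      have h0 : (0:ℝ) ∈ Icc (g a (e + ε)) (g a (e - ε)) :=
        ⟨le_of_lt hgr, le_of_lt hgl⟩
      obtain ⟨x₀, hx₀, hgx₀⟩ := h h0
      exact ⟨x₀, hx₀, hgx₀⟩
    have hx₀S : x₀ ∈ S a := (hSg a x₀).2 hx₀
    -- S a ⊆ Icc
    have hsub : S a ⊆ Icc (e - ε) (e + ε) := by
      intro x hx
      have hgx : g a x = 0 := (hSg a x).1 hx
      constructor
      · by_contra h
        push_neg at h
        have := hgmono a x (e - ε) (le_of_lt h)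
        linarith
      · by_contra h
        push_neg at h
        have := hgmono a (e + ε) x (le_of_lt h)
        linarith
    have hbddb : BddBelow (S a) := ⟨e - ε, fun x hx => (hsub hx).1⟩
    have hbdda : BddAbove (S a) := ⟨e + ε, fun x hx => (hsub hx).2⟩
    have hne : (S a).Nonempty := ⟨x₀, hx₀S⟩
    constructor
    · constructor
      · exact le_csInf hne fun x hx => (hsub hx).1
      · exact le_trans (csInf_le hbddb hx₀S) hx₀mem.2
    · constructor
      · exact le_trans hx₀mem.1 (le_csSup hbdda hx₀S)
      · exact csSup_le hne fun x hx => (hsub hx).2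
  -- conclude
  have conc : ∀ f : ℝ → ℝ, (∀ ε : ℝ, 0 < ε → ε ≤ 1 →
      ∀ᶠ a in (atTop : Filter ℝ), f a ∈ Icc (e - ε) (e + ε)) →
      Tendsto f atTop (nhds e) := by
    intro f hf
    rw [Metric.tendsto_nhds]
    intro ε hε
    have hε' : 0 < min (ε / 2) 1 := by
      refine lt_min (by linarith) one_pos
    filter_upwards [hf (min (ε / 2) 1) hε' (min_le_right _ _)] with a ⟨h1, h2⟩
    rw [Real.dist_eq, abs_lt]
    have : min (ε / 2) 1 ≤ ε / 2 := min_le_left _ _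
    constructor <;> linarith
  exact ⟨conc _ fun ε hε hε1 => (main ε hε hε1).mono fun a h => h.1,
    conc _ fun ε hε hε1 => (main ε hε hε1).mono fun a h => h.2⟩
end

section
/- Let φ: ℝ → ℝ be convex with subgradient φ'. Define S(x,y) = |𝟙_{x≥y} − α|·(φ(y) − φ(κ_{a,b}(x−y)+y) + κ_{a,b}(x−y)·φ'(x)). Then S(x,y) ≥ 0 for all x, y ∈ ℝ, and S(x,x) = 0. -/
open Set

lemma key13 (a b : ℝ) (ha : 0 < a) (hb : 0 < b)
    (φ φ' : ℝ → ℝ) (hconv : ConvexOn ℝ Set.univ φ)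
    (hsub : ∀ u v : ℝ, φ u + φ' u * (v - u) ≤ φ v) (x y : ℝ) :
    0 ≤ φ y - φ (kap a b (x - y) + y) + kap a b (x - y) * φ' x := by
  rcases le_or_gt (x - y) b with h1 | h1
  · rcases le_or_gt (-a) (x - y) with h2 | h2
    · -- kap = x - y
      have hk : kap a b (x - y) = x - y := by
        rw [kap, min_eq_left h1, max_eq_left h2]
      have hxx : x - y + y = x := by ring
      rw [hk, hxx]
      have hs := hsub x y
      have he : φ' x * (y - x) = -((x - y) * φ' x) := by ring
      linarith
    · -- x - y < -a, kap = -a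
      have hk : kap a b (x - y) = -a := by
        rw [kap, max_eq_right]
        exact le_trans (min_le_left _ _) h2.le
      rw [hk]
      have hyx : 0 < y - x := by linarith
      set t : ℝ := a / (y - x) with ht
      have ht0 : 0 ≤ t := div_nonneg ha.le hyx.le
      have ht1 : t ≤ 1 := by
        rw [ht, div_le_one hyx]; linarith
      have htd : t * (y - x) = a := by rw [ht]; field_simp
      have hc := hconv.2 (mem_univ x) (mem_univ y) ht0
        (by linarith : (0:ℝ) ≤ 1 - t) (by ring : t + (1 - t) = 1)
      simp only [smul_eq_mul] at hc
      have hpt : t * x + (1 - t) * y = -a + y := by linear_combination -htd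
      rw [hpt] at hc
      have hs2 : t * (φ x + φ' x * (y - x)) ≤ t * φ y :=
        mul_le_mul_of_nonneg_left (hsub x y) ht0
      have he : t * (φ x + φ' x * (y - x)) = t * φ x + a * φ' x := by
        linear_combination φ' x * htd
      linarith
  · -- b < x - y, kap = b
    have hk : kap a b (x - y) = b := by
      rw [kap, min_eq_right h1.le, max_eq_left (by linarith)]
    rw [hk]
    have hxy : 0 < x - y := by linarith
    set t : ℝ := b / (x - y) with ht
    have ht0 : 0 ≤ t := div_nonneg hb.le hxy.le
    have ht1 : t ≤ 1 := by
      rw [ht, div_le_one hxy]; linarith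
    have htd : t * (x - y) = b := by rw [ht]; field_simp
    have hc := hconv.2 (mem_univ x) (mem_univ y) ht0
      (by linarith : (0:ℝ) ≤ 1 - t) (by ring : t + (1 - t) = 1)
    simp only [smul_eq_mul] at hc
    have hpt : t * x + (1 - t) * y = b + y := by linear_combination htd
    rw [hpt] at hc
    have hs2 : t * (φ x + φ' x * (y - x)) ≤ t * φ y :=
      mul_le_mul_of_nonneg_left (hsub x y) ht0
    have he : t * (φ x + φ' x * (y - x)) = t * φ x - b * φ' x := by
      linear_combination -(φ' x) * htd
    linarith

/-- The general form of a consistent scoring function for the Huber functional is a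
nonnegative scoring function vanishing on the diagonal. -/
theorem stmt13 (a b α : ℝ) (ha : 0 < a) (hb : 0 < b) (hα : α ∈ Set.Ioo (0 : ℝ) 1)
    (φ φ' : ℝ → ℝ) (hconv : ConvexOn ℝ Set.univ φ)
    (hsub : ∀ u v : ℝ, φ u + φ' u * (v - u) ≤ φ v) :
    (∀ x y : ℝ, 0 ≤ |(if y ≤ x then (1 : ℝ) else 0) - α| *
        (φ y - φ (kap a b (x - y) + y) + kap a b (x - y) * φ' x)) ∧
    (∀ x : ℝ, |(if x ≤ x then (1 : ℝ) else 0) - α| *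
        (φ x - φ (kap a b (x - x) + x) + kap a b (x - x) * φ' x) = 0) := by
  have hk0 : kap a b 0 = 0 := by
    rw [kap, min_eq_left hb.le, max_eq_left (by linarith)]
  constructor
  · intro x y
    exact mul_nonneg (abs_nonneg _) (key13 a b ha hb φ φ' hconv hsub x y)
  · intro x
    simp [hk0]
end

section
/- The choice φ(t) = t² in the general consistent-scoring-function form yields twice the generalized Huber loss: |𝟙_{x≥y} − α|·(y² − (κ_{a,b}(x−y)+y)² + 2x·κ_{a,b}(x−y)) = 2·h^α_{a,b}(x−y) for all x, y ∈ ℝ. -/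
open Set

/-- The choice `φ(t) = t²` in the general consistent-scoring-function form yields twice
the generalized Huber loss. -/
theorem stmt14 (a b α : ℝ) (ha : 0 < a) (hb : 0 < b) (hα : α ∈ Set.Ioo (0 : ℝ) 1) :
    ∀ x y : ℝ, |(if y ≤ x then (1 : ℝ) else 0) - α| *
        (y ^ 2 - (kap a b (x - y) + y) ^ 2 + 2 * x * kap a b (x - y))
      = 2 * genHuber α a b (x - y) := by
  obtain ⟨ha0, ha1⟩ := hα
  intro x y
  unfold kap genHuber
  by_cases h1 : x - y < -a
  · have hxy : ¬ y ≤ x := by linarith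
    rw [min_eq_left (by linarith : x - y ≤ b), max_eq_right h1.le, if_neg hxy,
      if_pos h1, abs_of_neg (by linarith : (0:ℝ) - α < 0)]
    ring
  · push_neg at h1
    by_cases h2 : b < x - y
    · have hxy : y ≤ x := by linarith
      rw [min_eq_right h2.le, max_eq_left (by linarith), if_pos hxy,
        if_neg (show ¬ x - y < -a from not_lt.mpr h1), if_pos h2,
        abs_of_pos (by linarith : (0:ℝ) < 1 - α)]
      ring
    · push_neg at h2
      rw [min_eq_left h2, max_eq_left h1,
        if_neg (show ¬ x - y < -a from not_lt.mpr h1),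
        if_neg (show ¬ b < x - y from not_lt.mpr h2)]
      have hind : (if (0:ℝ) ≤ x - y then (1:ℝ) else 0) = (if y ≤ x then (1:ℝ) else 0) := by
        simp [sub_nonneg]
      rw [hind]
      ring
end

section
/- For each θ ∈ ℝ, the elementary scoring function S^H_{α,a,b,θ} arises from the general form with the convex function φ(t) = (t − θ)₊ and subgradient φ'(t) = 𝟙_{θ < t}: that is, |𝟙_{x≥y} − α|·((y−θ)₊ − (κ_{a,b}(x−y)+y−θ)₊ + κ_{a,b}(x−y)·𝟙_{θ<x}) = S^H_{α,a,b,θ}(x,y) for all x, y ∈ ℝ. -/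
open Set

/-- Elementary scoring function `S^H_{α,a,b,θ}` for the Huber functional. -/
noncomputable def elemScore (α a b θ x y : ℝ) : ℝ :=
  if y ≤ θ ∧ θ < x then (1 - α) * min (θ - y) b
  else if x ≤ θ ∧ θ < y then α * min (y - θ) a
  else 0

/-- The elementary scoring function arises from the general consistent-scoring-function form
with the convex function `φ(t) = (t − θ)₊` and subgradient `φ'(t) = 𝟙_{θ < t}`. -/
theorem stmt18 (a b α θ : ℝ) (ha : 0 < a) (hb : 0 < b) (hα : α ∈ Set.Ioo (0 : ℝ) 1) :
    ∀ x y : ℝ, |(if y ≤ x then (1 : ℝ) else 0) - α| *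
        (max (y - θ) 0 - max (kap a b (x - y) + y - θ) 0 +
          kap a b (x - y) * (if θ < x then (1 : ℝ) else 0))
      = elemScore α a b θ x y := by
  obtain ⟨h0, h1⟩ := hα
  intro x y
  unfold kap elemScore
  rcases le_or_gt y x with hxy | hxy
  · rw [if_pos hxy, abs_of_pos (show (0:ℝ) < 1 - α by linarith)]
    have hmin0 : (0:ℝ) ≤ min (x - y) b := le_min (by linarith) hb.le
    have hk : max (min (x - y) b) (-a) = min (x - y) b :=
      max_eq_left (by linarith)
    rw [hk]
    rcases lt_or_ge θ x with hθx | hθx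
    · rw [if_pos hθx, mul_one]
      rcases le_or_gt y θ with hyθ | hyθ
      · rw [if_pos ⟨hyθ, hθx⟩]
        congr 1
        rw [max_eq_right (by linarith : y - θ ≤ 0)]
        rcases le_total (x - y) b with h | h
        · rw [min_eq_left h, min_eq_left (by linarith : θ - y ≤ b),
            max_eq_left (by linarith : (0:ℝ) ≤ x - y + y - θ)]
          ring
        · rw [min_eq_right h]
          rcases le_total (θ - y) b with h2 | h2
          · rw [min_eq_left h2, max_eq_left (by linarith : (0:ℝ) ≤ b + y - θ)]
            ring
          · rw [min_eq_right h2, max_eq_right (by linarith : b + y - θ ≤ 0)]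
            ring
      · rw [if_neg (by rintro ⟨h', _⟩; linarith), if_neg (by rintro ⟨h', _⟩; linarith),
          max_eq_left (by linarith : (0:ℝ) ≤ y - θ),
          max_eq_left (by linarith : (0:ℝ) ≤ min (x - y) b + y - θ)]
        ring
    · rw [if_neg (not_lt.2 hθx), mul_zero,
        if_neg (by rintro ⟨_, h'⟩; linarith), if_neg (by rintro ⟨_, h'⟩; linarith)]
      have hle : min (x - y) b ≤ x - y := min_le_left _ _
      rw [max_eq_right (by linarith : y - θ ≤ 0),
        max_eq_right (by linarith : min (x - y) b + y - θ ≤ 0)]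
      ring
  · rw [if_neg (not_le.2 hxy), zero_sub, abs_neg, abs_of_pos h0]
    have hk : max (min (x - y) b) (-a) = max (x - y) (-a) := by
      rw [min_eq_left (by linarith : x - y ≤ b)]
    rw [hk]
    rcases lt_or_ge θ x with hθx | hθx
    · rw [if_pos hθx, mul_one,
        if_neg (by rintro ⟨h', _⟩; linarith), if_neg (by rintro ⟨h', _⟩; linarith),
        max_eq_left (by linarith : (0:ℝ) ≤ y - θ),
        max_eq_left (by have := le_max_left (x - y) (-a); linarith)]
      ring
    · rw [if_neg (not_lt.2 hθx), mul_zero,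
        if_neg (by rintro ⟨_, h'⟩; linarith)]
      rcases lt_or_ge θ y with hθy | hθy
      · rw [if_pos ⟨hθx, hθy⟩]
        rw [max_eq_left (by linarith : (0:ℝ) ≤ y - θ)]
        rcases le_total (y - θ) a with h | h
        · rw [min_eq_left h,
            max_eq_right (by
              have : max (x - y) (-a) ≤ θ - y := max_le (by linarith) (by linarith)
              linarith)]
          ring
        · rw [min_eq_right h, max_eq_right (by linarith : x - y ≤ -a),
            max_eq_left (by linarith : (0:ℝ) ≤ -a + y - θ)]
          ring
      · rw [if_neg (by rintro ⟨_, h'⟩; linarith),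
          max_eq_right (by linarith : y - θ ≤ 0),
          max_eq_right (by
            have : max (x - y) (-a) ≤ 0 := max_le (by linarith) (by linarith)
            linarith)]
        ring
end
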